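/- arXiv:1511.05214 — 7 statements merged into one kernel-verified Lean document; each statement's English description precedes it below -/
import Mathlib

section
/- Let 1 ≤ p ≤ 2 and let (Ω, 𝓑, μ) be a measure space with a nonnegative measure μ. Then there exists a real Hilbert space H and a mapping S : L_p(μ) → H such that ‖S(f) − S(g)‖_H = ‖f − g‖_p^{p/2} for all f, g ∈ L_p(μ). -/
/-! For `0 < p < 2` the constant `c_p = ∫ (1 - cos t) |t|^(-1-p) dt` is finite and positive, and
the substitution `t ↦ a t` gives `∫ (1 - cos (a t)) |t|^(-1-p) dt = |a|^p c_p`. Since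
`|e^{iat} - e^{ibt}|² = 2 (1 - cos ((a - b) t))`, Tonelli shows that
`f ↦ ((ω, t) ↦ (e^{i t f(ω)} - 1) |t|^{-(1+p)/2})` maps `L_p(μ)` into `L²(μ ⊗ dt; ℂ)` with
`‖S f - S g‖₂² = 2 c_p ‖f - g‖_p^p`; rescaling by `(2 c_p)^{-1/2}` gives the embedding.
For `p = 2` the identity of `L²(μ)` works. -/

open MeasureTheory Set Complex
open scoped ENNReal

theorem integrable_of_even_of_integrableOn_Ioi {E : Type*} [NormedAddCommGroup E] {f : ℝ → E}
    (heven : ∀ t, f (-t) = f t) (hf : IntegrableOn f (Ioi 0)) : Integrable f := by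
  have hIio : IntegrableOn (fun t => f (-t)) (Iio 0) :=
    IntegrableOn.comp_neg_Iio (by rwa [neg_zero])
  simp only [heven] at hIio
  rw [← integrableOn_univ, ← Iic_union_Ioi (a := (0 : ℝ))]
  exact ((integrableOn_Iic_iff_integrableOn_Iio enorm_ne_top).2 hIio).union hf

theorem lintegral_comp_mul_left (f : ℝ → ℝ≥0∞) {a : ℝ} (ha : a ≠ 0) :
    ∫⁻ t, f (a * t) = ENNReal.ofReal |a⁻¹| * ∫⁻ t, f t := by
  rw [← smul_eq_mul, ← lintegral_smul_measure, ← Real.map_volume_mul_left ha]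
  exact (lintegral_map_equiv f (Homeomorph.mulLeft₀ a ha).toMeasurableEquiv).symm

noncomputable def oneSubCosKernel (p t : ℝ) : ℝ := (1 - Real.cos t) * |t| ^ (-(1 + p))

noncomputable def snowflakeConst (p : ℝ) : ℝ≥0∞ := ∫⁻ t, ENNReal.ofReal (oneSubCosKernel p t)

theorem oneSubCosKernel_nonneg (p t : ℝ) : 0 ≤ oneSubCosKernel p t :=
  mul_nonneg (by linarith [Real.cos_le_one t]) (by positivity)

theorem integrable_oneSubCosKernel {p : ℝ} (hp0 : 0 < p) (hp2 : p < 2) :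
    Integrable (oneSubCosKernel p) := by
  have hmeas : AEStronglyMeasurable (oneSubCosKernel p) := by
    unfold oneSubCosKernel; fun_prop
  refine integrable_of_even_of_integrableOn_Ioi (fun t => by simp [oneSubCosKernel]) ?_
  rw [← Ioc_union_Ioi_eq_Ioi zero_le_one]
  refine IntegrableOn.union ?_ ?_
  · have hdom : IntegrableOn (fun t : ℝ => t ^ (1 - p)) (Ioc 0 1) := by
      rw [integrableOn_Ioc_iff_integrableOn_Ioo,
        intervalIntegral.integrableOn_Ioo_rpow_iff one_pos]
      linarith
    refine hdom.mono' hmeas.restrict ?_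
    filter_upwards [ae_restrict_mem measurableSet_Ioc] with t ht
    have ht0 : 0 < t := ht.1
    rw [Real.norm_of_nonneg (oneSubCosKernel_nonneg p t), oneSubCosKernel, abs_of_pos ht0]
    have hcos : 1 - Real.cos t ≤ t ^ 2 := by nlinarith [Real.one_sub_sq_div_two_le_cos (x := t)]
    calc (1 - Real.cos t) * t ^ (-(1 + p)) ≤ t ^ (2 : ℝ) * t ^ (-(1 + p)) := by
          rw [Real.rpow_two]; gcongr
      _ = t ^ (1 - p) := by rw [← Real.rpow_add ht0]; ring_nf
  · have hdom : IntegrableOn (fun t : ℝ => 2 * t ^ (-(1 + p))) (Ioi 1) :=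
      (integrableOn_Ioi_rpow_of_lt (by linarith) one_pos).const_mul 2
    refine hdom.mono' hmeas.restrict ?_
    filter_upwards [ae_restrict_mem measurableSet_Ioi] with t ht
    have ht0 : (0 : ℝ) < t := one_pos.trans ht
    rw [Real.norm_of_nonneg (oneSubCosKernel_nonneg p t), oneSubCosKernel, abs_of_pos ht0]
    gcongr
    linarith [Real.neg_one_le_cos t]

theorem snowflakeConst_lt_top {p : ℝ} (hp0 : 0 < p) (hp2 : p < 2) : snowflakeConst p < ∞ :=
  (integrable_oneSubCosKernel hp0 hp2).lintegral_lt_top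

theorem snowflakeConst_pos (p : ℝ) : 0 < snowflakeConst p := by
  have hmeas : Measurable fun t => ENNReal.ofReal (oneSubCosKernel p t) := by
    unfold oneSubCosKernel; fun_prop
  rw [snowflakeConst, lintegral_pos_iff_support hmeas]
  refine (measure_mono fun t ht => ?_).trans_lt'
    (by simpa using Real.pi_pos : 0 < volume (Ioo 0 Real.pi))
  have hcos : Real.cos t < 1 := by
    simpa using Real.cos_lt_cos_of_nonneg_of_le_pi le_rfl ht.2.le ht.1
  have : 0 < oneSubCosKernel p t :=
    mul_pos (by linarith) (Real.rpow_pos_of_pos (abs_pos.2 ht.1.ne') _)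
  simpa [Function.mem_support] using this

theorem lintegral_one_sub_cos_mul_eq_enorm_rpow_mul {p : ℝ} (hp : 0 < p) (a : ℝ) :
    ∫⁻ t, ENNReal.ofReal ((1 - Real.cos (a * t)) * |t| ^ (-(1 + p)))
      = ‖a‖ₑ ^ p * snowflakeConst p := by
  rcases eq_or_ne a 0 with rfl | ha
  · simp [hp]
  have hscale (t : ℝ) :
      (1 - Real.cos (a * t)) * |t| ^ (-(1 + p)) = |a| ^ (1 + p) * oneSubCosKernel p (a * t) := by
    rw [oneSubCosKernel, abs_mul, Real.mul_rpow (abs_nonneg a) (abs_nonneg t),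
      Real.rpow_neg (abs_nonneg a)]
    field_simp
  simp_rw [hscale, ENNReal.ofReal_mul (by positivity : (0 : ℝ) ≤ |a| ^ (1 + p))]
  rw [lintegral_const_mul' _ _ ENNReal.ofReal_ne_top,
    lintegral_comp_mul_left (fun t => ENNReal.ofReal (oneSubCosKernel p t)) ha, ← mul_assoc,
    ← ENNReal.ofReal_mul (by positivity), Real.enorm_eq_ofReal_abs,
    ENNReal.ofReal_rpow_of_nonneg (abs_nonneg a) hp.le, abs_inv, Real.rpow_add (abs_pos.2 ha),
    Real.rpow_one]
  congr 2
  field_simp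

theorem norm_exp_ofReal_mul_I_sub_sq (a b : ℝ) :
    ‖cexp (a * I) - cexp (b * I)‖ ^ 2 = 2 * (1 - Real.cos (a - b)) := by
  rw [← Complex.normSq_eq_norm_sq, Complex.normSq_apply]
  simp only [Complex.sub_re, Complex.sub_im, Complex.exp_ofReal_mul_I_re,
    Complex.exp_ofReal_mul_I_im]
  rw [Real.cos_sub]
  nlinarith [Real.sin_sq_add_cos_sq a, Real.sin_sq_add_cos_sq b]

section SnowflakeMap

variable {Ω : Type*} {p : ℝ} {u v : Ω → ℝ}

noncomputable def snowflakeMap (p : ℝ) (u : Ω → ℝ) (z : Ω × ℝ) : ℂ :=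
  (cexp (↑(z.2 * u z.1) * I) - 1) * ↑(|z.2| ^ (-(1 + p) / 2))

theorem snowflakeMap_zero (p : ℝ) : snowflakeMap p (0 : Ω → ℝ) = 0 := by
  ext z; simp [snowflakeMap]

theorem enorm_snowflakeMap_sub_sq (p : ℝ) (u v : Ω → ℝ) (z : Ω × ℝ) :
    ‖snowflakeMap p u z - snowflakeMap p v z‖ₑ ^ 2
      = 2 * ENNReal.ofReal ((1 - Real.cos ((u z.1 - v z.1) * z.2)) * |z.2| ^ (-(1 + p))) := by
  have hdiff : snowflakeMap p u z - snowflakeMap p v z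
      = (cexp (↑(z.2 * u z.1) * I) - cexp (↑(z.2 * v z.1) * I)) * ↑(|z.2| ^ (-(1 + p) / 2)) := by
    simp only [snowflakeMap]; ring
  have hnorm : ‖snowflakeMap p u z - snowflakeMap p v z‖ ^ 2
      = 2 * ((1 - Real.cos ((u z.1 - v z.1) * z.2)) * |z.2| ^ (-(1 + p))) := by
    rw [hdiff, norm_mul, mul_pow, norm_exp_ofReal_mul_I_sub_sq, Complex.norm_real,
      Real.norm_of_nonneg (by positivity), ← Real.rpow_natCast, ← Real.rpow_mul (abs_nonneg _)]
    ring_nf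
  rw [← ofReal_norm, ← ENNReal.ofReal_pow (norm_nonneg _), hnorm, ENNReal.ofReal_mul zero_le_two,
    ENNReal.ofReal_ofNat]

variable [MeasurableSpace Ω] {μ : Measure Ω}

theorem measurable_snowflakeMap (p : ℝ) (hu : Measurable u) : Measurable (snowflakeMap p u) := by
  unfold snowflakeMap; fun_prop

theorem lintegral_enorm_snowflakeMap_sub_sq (hp : 0 < p) (hu : Measurable u) (hv : Measurable v) :
    ∫⁻ z, ‖snowflakeMap p u z - snowflakeMap p v z‖ₑ ^ 2 ∂μ.prod volume
      = 2 * snowflakeConst p * ∫⁻ ω, ‖u ω - v ω‖ₑ ^ p ∂μ := by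
  have hmeas : Measurable fun z : Ω × ℝ =>
      ENNReal.ofReal ((1 - Real.cos ((u z.1 - v z.1) * z.2)) * |z.2| ^ (-(1 + p))) := by
    fun_prop
  simp_rw [enorm_snowflakeMap_sub_sq]
  rw [lintegral_const_mul _ hmeas, lintegral_prod _ hmeas.aemeasurable]
  simp_rw [lintegral_one_sub_cos_mul_eq_enorm_rpow_mul hp]
  rw [lintegral_mul_const _ (by fun_prop), mul_assoc, mul_comm (∫⁻ _, _ ∂μ)]

theorem eLpNorm_snowflakeMap_sub (hp : 0 < p) (hu : Measurable u) (hv : Measurable v) :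
    eLpNorm (snowflakeMap p u - snowflakeMap p v) 2 (μ.prod volume)
      = (2 * snowflakeConst p) ^ (1 / 2 : ℝ)
        * eLpNorm (u - v) (ENNReal.ofReal p) μ ^ (p / 2) := by
  rw [eLpNorm_eq_lintegral_rpow_enorm_toReal two_ne_zero ENNReal.ofNat_ne_top,
    eLpNorm_eq_lintegral_rpow_enorm_toReal (by simpa using hp) ENNReal.ofReal_ne_top,
    ENNReal.toReal_ofReal hp.le, ENNReal.toReal_ofNat]
  simp only [Pi.sub_apply, ENNReal.rpow_ofNat]
  rw [lintegral_enorm_snowflakeMap_sub_sq hp hu hv, ENNReal.mul_rpow_of_nonneg _ _ (by norm_num),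
    ← ENNReal.rpow_mul]
  congr 2
  field_simp

theorem memLp_snowflakeMap (hp0 : 0 < p) (hp2 : p < 2) (hu : Measurable u)
    (hu' : MemLp u (ENNReal.ofReal p) μ) : MemLp (snowflakeMap p u) 2 (μ.prod volume) := by
  refine ⟨(measurable_snowflakeMap p hu).aestronglyMeasurable, ?_⟩
  have h := eLpNorm_snowflakeMap_sub (μ := μ) hp0 hu (measurable_zero : Measurable (0 : Ω → ℝ))
  rw [snowflakeMap_zero, sub_zero, sub_zero] at h
  rw [h]
  exact ENNReal.mul_lt_top
    (ENNReal.rpow_lt_top_of_nonneg (by norm_num)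
      (ENNReal.mul_ne_top (by norm_num) (snowflakeConst_lt_top hp0 hp2).ne))
    (ENNReal.rpow_lt_top_of_nonneg (by positivity) hu'.eLpNorm_ne_top)

theorem exists_snowflake_embedding_of_lt_two (μ : Measure Ω) (hp0 : 0 < p) (hp2 : p < 2) :
    ∃ S : Lp ℝ (ENNReal.ofReal p) μ → Lp ℂ 2 (μ.prod (volume : Measure ℝ)),
      ∀ f g, ‖S f - S g‖ = ‖f - g‖ ^ (p / 2) := by
  have hmem (f : Lp ℝ (ENNReal.ofReal p) μ) : MemLp (snowflakeMap p f) 2 (μ.prod volume) :=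
    memLp_snowflakeMap hp0 hp2 (Lp.stronglyMeasurable f).measurable (Lp.memLp f)
  set c : ℝ := ((2 * snowflakeConst p) ^ (1 / 2 : ℝ)).toReal
  have hc : 0 < c := ENNReal.toReal_pos (by simp [(snowflakeConst_pos p).ne'])
    (ENNReal.rpow_ne_top_of_nonneg (by norm_num)
      (ENNReal.mul_ne_top (by norm_num) (snowflakeConst_lt_top hp0 hp2).ne))
  refine ⟨fun f => c⁻¹ • (hmem f).toLp, fun f g => ?_⟩
  rw [← smul_sub, ← MemLp.toLp_sub, norm_smul, Lp.norm_toLp,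
    eLpNorm_snowflakeMap_sub hp0 (Lp.stronglyMeasurable f).measurable
      (Lp.stronglyMeasurable g).measurable,
    ENNReal.toReal_mul, norm_inv, Real.norm_of_nonneg hc.le, inv_mul_cancel_left₀ hc.ne',
    ← ENNReal.toReal_rpow, Lp.norm_def, eLpNorm_congr_ae (Lp.coeFn_sub f g)]

end SnowflakeMap

/-- For `1 ≤ p ≤ 2` and any measure space `(Ω, 𝓑, μ)`, there is a real
Hilbert space `H` and a map `S : L_p(μ) → H` with `‖S f - S g‖ = ‖f - g‖_p ^ (p/2)`
for all `f, g ∈ L_p(μ)`. -/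
theorem snowflake_embedding_of_Lp_into_Hilbert
    (p : ℝ) (hp1 : 1 ≤ p) (hp2 : p ≤ 2)
    {Ω : Type} [MeasurableSpace Ω] (μ : Measure Ω) :
    ∃ (H : Type) (_ : NormedAddCommGroup H) (_ : InnerProductSpace ℝ H)
      (_ : CompleteSpace H) (S : Lp ℝ (ENNReal.ofReal p) μ → H),
      ∀ f g : Lp ℝ (ENNReal.ofReal p) μ,
        ‖S f - S g‖ = ‖f - g‖ ^ (p / 2) := by
  rcases hp2.lt_or_eq with hp2 | rfl
  · obtain ⟨S, hS⟩ := exists_snowflake_embedding_of_lt_two μ (by linarith) hp2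
    exact ⟨_, _, inferInstance, inferInstance, S, hS⟩
  · rw [show ENNReal.ofReal 2 = 2 by simp]
    exact ⟨Lp ℝ 2 μ, inferInstance, inferInstance, inferInstance, id, fun f g => by norm_num⟩
end

section
/- Let 1 ≤ p ≤ 2. Then there exists a real Hilbert space H and a mapping S : ℓ_p → H such that ‖S(x) − S(y)‖_H = ‖x − y‖_p^{p/2} for all x, y ∈ ℓ_p. In other words, the (p/2)-snowflake of ℓ_p embeds isometrically into a Hilbert space. -/
/-!
For `0 < p < 2` the map `t ↦ (s ↦ (e^{ist} - 1) s^{-(1+p)/2})` sends `ℝ` into `L²(0, ∞; ℂ)`, and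
the substitution `s ↦ |t - u| s` gives `‖F t - F u‖² = K |t - u|^p` with
`K = ∫₀^∞ 4 sin²(s/2) s^{-1-p} ds`, which is finite and positive exactly in this range; for `p = 2`
the identity of `ℝ` already works. Applying such a one-dimensional embedding `f` coordinatewise,
`x ↦ (f xᵢ)ᵢ`, the `p`-th power of the `ℓ_p` distance becomes the squared `ℓ₂` distance.
-/

open MeasureTheory Set
open scoped ENNReal

lemma MeasureTheory.MemLp.norm_toLp_sq {α E : Type*} [MeasurableSpace α] {μ : Measure α}
    [NormedAddCommGroup E] {f : α → E} (hf : MemLp f 2 μ) :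
    ‖hf.toLp f‖ ^ 2 = ∫ x, ‖f x‖ ^ 2 ∂μ := by
  rw [Lp.norm_toLp, hf.eLpNorm_eq_integral_rpow_norm two_ne_zero ENNReal.ofNat_ne_top,
    ENNReal.toReal_ofReal (by positivity)]
  simp only [ENNReal.toReal_ofNat, Real.rpow_two]
  rw [← Real.rpow_natCast, ← Real.rpow_mul (integral_nonneg fun x => by positivity)]
  norm_num

theorem lp.exists_map_norm_sub_eq_rpow {ι F E : Type*} [NormedAddCommGroup F]
    [NormedAddCommGroup E] {p r : ℝ≥0∞} (hp : 0 < p.toReal) (hr : 0 < r.toReal)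
    (f : F → E) (hf0 : f 0 = 0)
    (hf : ∀ a b, ‖f a - f b‖ ^ r.toReal = ‖a - b‖ ^ p.toReal) :
    ∃ S : lp (fun _ : ι => F) p → lp (fun _ : ι => E) r,
      ∀ x y, ‖S x - S y‖ = ‖x - y‖ ^ (p.toReal / r.toReal) := by
  have hmem (x : lp (fun _ : ι => F) p) : Memℓp (fun i => f (x i)) r := by
    refine memℓp_gen ((memℓp_gen_iff hp).1 x.2 |>.congr fun i => ?_)
    simpa [hf0] using (hf (x i) 0).symm
  refine ⟨fun x => ⟨_, hmem x⟩, fun x y => ?_⟩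
  have hsum : ‖(⟨_, hmem x⟩ - ⟨_, hmem y⟩ : lp (fun _ : ι => E) r)‖ ^ r.toReal
      = ‖x - y‖ ^ p.toReal := by
    simp only [lp.norm_rpow_eq_tsum hp, lp.norm_rpow_eq_tsum hr, lp.coeFn_sub, Pi.sub_apply]
    exact tsum_congr fun i => hf _ _
  rw [div_eq_mul_inv, Real.rpow_mul (lp.norm_nonneg' (x - y)), ← hsum,
    Real.rpow_rpow_inv (lp.norm_nonneg' _) hr.ne']

noncomputable def snowflakeKernel (p s : ℝ) : ℝ := (2 * Real.sin (s / 2)) ^ 2 * s ^ (-1 - p)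

noncomputable def snowflakeFun (p t s : ℝ) : ℂ :=
  (Complex.exp (Complex.I * (s * t : ℝ)) - 1) * (s ^ ((-1 - p) / 2) : ℝ)

section

variable {p : ℝ}

lemma snowflakeKernel_nonneg {s : ℝ} (hs : 0 < s) : 0 ≤ snowflakeKernel p s :=
  mul_nonneg (sq_nonneg _) (Real.rpow_nonneg hs.le _)

lemma continuousOn_snowflakeKernel : ContinuousOn (snowflakeKernel p) (Ioi 0) :=
  (by fun_prop : Continuous fun s => (2 * Real.sin (s / 2)) ^ 2).continuousOn.mul
    (continuousOn_id.rpow_const fun _ hs => .inl (ne_of_gt hs))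

lemma integrableOn_snowflakeKernel_Ioc (hp : p < 2) :
    IntegrableOn (snowflakeKernel p) (Ioc 0 1) := by
  have hdom : IntegrableOn (fun s : ℝ => s ^ (1 - p)) (Ioc 0 1) := by
    simpa [intervalIntegrable_iff, uIoc_of_le zero_le_one] using
      intervalIntegral.intervalIntegrable_rpow' (a := 0) (b := 1) (r := 1 - p) (by linarith)
  refine hdom.mono' ((continuousOn_snowflakeKernel.mono Ioc_subset_Ioi_self).aestronglyMeasurable
    measurableSet_Ioc) ((ae_restrict_iff' measurableSet_Ioc).2 (.of_forall fun s hs => ?_))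
  have hsin : (2 * Real.sin (s / 2)) ^ 2 ≤ s ^ (2 : ℝ) := by
    rw [Real.rpow_two]; nlinarith [Real.sin_sq_le_sq (x := s / 2)]
  calc ‖snowflakeKernel p s‖ = snowflakeKernel p s :=
        Real.norm_of_nonneg (snowflakeKernel_nonneg hs.1)
    _ ≤ s ^ (2 : ℝ) * s ^ (-1 - p) :=
        mul_le_mul_of_nonneg_right hsin (Real.rpow_nonneg hs.1.le _)
    _ = s ^ (1 - p) := by rw [← Real.rpow_add hs.1]; ring_nf

lemma integrableOn_snowflakeKernel_Ioi_one (hp : 0 < p) :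
    IntegrableOn (snowflakeKernel p) (Ioi 1) := by
  refine ((integrableOn_Ioi_rpow_of_lt (by linarith : -1 - p < -1) one_pos).const_mul 4).mono'
    ((continuousOn_snowflakeKernel.mono (Ioi_subset_Ioi zero_le_one)).aestronglyMeasurable
      measurableSet_Ioi) ((ae_restrict_iff' measurableSet_Ioi).2 (.of_forall fun s hs => ?_))
  have hs0 : (0 : ℝ) < s := one_pos.trans hs
  rw [Real.norm_of_nonneg (snowflakeKernel_nonneg hs0)]
  exact mul_le_mul_of_nonneg_right (by nlinarith [Real.sin_sq_le_one (s / 2)])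
    (Real.rpow_nonneg hs0.le _)

lemma integrableOn_snowflakeKernel (hp0 : 0 < p) (hp2 : p < 2) :
    IntegrableOn (snowflakeKernel p) (Ioi 0) := by
  rw [← Ioc_union_Ioi_eq_Ioi zero_le_one]
  exact (integrableOn_snowflakeKernel_Ioc hp2).union (integrableOn_snowflakeKernel_Ioi_one hp0)

lemma integral_snowflakeKernel_pos (hp0 : 0 < p) (hp2 : p < 2) :
    0 < ∫ s in Ioi 0, snowflakeKernel p s := by
  rw [setIntegral_pos_iff_support_of_nonneg_ae
    ((ae_restrict_iff' measurableSet_Ioi).2 (.of_forall fun s hs => snowflakeKernel_nonneg hs))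
    (integrableOn_snowflakeKernel hp0 hp2)]
  have hsupp : Ioo 0 (2 * Real.pi) ⊆ Function.support (snowflakeKernel p) ∩ Ioi 0 := by
    refine fun s hs => ⟨(mul_pos (pow_pos ?_ 2) (Real.rpow_pos_of_pos hs.1 _)).ne', hs.1⟩
    have := Real.sin_pos_of_pos_of_lt_pi (x := s / 2) (by linarith [hs.1]) (by linarith [hs.2])
    positivity
  refine (measure_mono hsupp).trans_lt' ?_
  simp [Real.pi_pos]

lemma integrableOn_snowflakeKernel_mul (hp0 : 0 < p) (hp2 : p < 2) {a : ℝ} (ha : 0 ≤ a) :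
    IntegrableOn (fun s => a ^ (1 + p) * snowflakeKernel p (a * s)) (Ioi 0) := by
  obtain rfl | ha := ha.eq_or_lt
  · simp [Real.zero_rpow (by linarith : 1 + p ≠ 0)]
  refine Integrable.const_mul
    ((integrableOn_Ioi_comp_mul_left_iff (snowflakeKernel p) 0 ha).2 ?_) _
  simpa using integrableOn_snowflakeKernel hp0 hp2

lemma integral_snowflakeKernel_mul (hp0 : 0 < p) {a : ℝ} (ha : 0 ≤ a) :
    ∫ s in Ioi 0, a ^ (1 + p) * snowflakeKernel p (a * s)
      = a ^ p * ∫ s in Ioi 0, snowflakeKernel p s := by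
  obtain rfl | ha := ha.eq_or_lt
  · simp [Real.zero_rpow (by linarith : 1 + p ≠ 0), Real.zero_rpow hp0.ne']
  rw [integral_const_mul, integral_comp_mul_left_Ioi _ 0 ha, mul_zero, smul_eq_mul, ← mul_assoc,
    ← Real.rpow_neg_one, ← Real.rpow_add ha]
  ring_nf

lemma norm_snowflakeFun_sub_sq (t u : ℝ) {s : ℝ} (hs : 0 < s) :
    ‖snowflakeFun p t s - snowflakeFun p u s‖ ^ 2
      = |t - u| ^ (1 + p) * snowflakeKernel p (|t - u| * s) := by
  have hdiff : snowflakeFun p t s - snowflakeFun p u s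
      = Complex.exp (Complex.I * (s * u : ℝ)) * (Complex.exp (Complex.I * (s * (t - u) : ℝ)) - 1)
        * (s ^ ((-1 - p) / 2) : ℝ) := by
    simp only [snowflakeFun, mul_sub, ← Complex.exp_add]
    push_cast; ring_nf
  have hsin : (2 * Real.sin (s * (t - u) / 2)) ^ 2 = (2 * Real.sin (|t - u| * s / 2)) ^ 2 := by
    rcases abs_choice (t - u) with h | h <;> rw [h]
    · ring_nf
    · rw [show -(t - u) * s / 2 = -(s * (t - u) / 2) by ring, Real.sin_neg]; ring
  rw [hdiff, norm_mul, norm_mul, Complex.norm_exp_I_mul_ofReal,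
    Complex.norm_exp_I_mul_ofReal_sub_one, Complex.norm_real,
    Real.norm_of_nonneg (Real.rpow_nonneg hs.le _), one_mul, mul_pow,
    Real.norm_eq_abs, sq_abs, hsin, ← Real.rpow_natCast (s ^ _) 2, ← Real.rpow_mul hs.le]
  obtain htu | htu := (abs_nonneg (t - u)).eq_or_lt
  · simp [← htu, snowflakeKernel]
  rw [snowflakeKernel, Real.mul_rpow htu.le hs.le, mul_left_comm, ← mul_assoc (|t - u| ^ (1 + p)),
    ← Real.rpow_add htu]
  norm_num

lemma memLp_snowflakeFun (hp0 : 0 < p) (hp2 : p < 2) (t : ℝ) :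
    MemLp (snowflakeFun p t) 2 (volume.restrict (Ioi 0)) := by
  have hcont : ContinuousOn (snowflakeFun p t) (Ioi 0) :=
    (by fun_prop : Continuous fun s : ℝ => Complex.exp (Complex.I * (s * t : ℝ)) - 1
      ).continuousOn.mul (Complex.continuous_ofReal.comp_continuousOn
        (continuousOn_id.rpow_const fun _ hs => .inl (ne_of_gt hs)))
  refine (memLp_two_iff_integrable_sq_norm (hcont.aestronglyMeasurable measurableSet_Ioi)).2 ?_
  refine (integrableOn_snowflakeKernel_mul hp0 hp2 (abs_nonneg t)).congr_fun (fun s hs => ?_)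
    measurableSet_Ioi
  simpa [snowflakeFun] using (norm_snowflakeFun_sub_sq t 0 hs).symm

lemma exists_L2_norm_sub_sq_eq_rpow (hp0 : 0 < p) (hp2 : p < 2) :
    ∃ f : ℝ → Lp ℂ 2 (volume.restrict (Ioi (0 : ℝ))), ∀ t u, ‖f t - f u‖ ^ 2 = |t - u| ^ p := by
  set K := ∫ s in Ioi 0, snowflakeKernel p s
  have hK : 0 < K := integral_snowflakeKernel_pos hp0 hp2
  refine ⟨fun t => (Real.sqrt K)⁻¹ • (memLp_snowflakeFun hp0 hp2 t).toLp _, fun t u => ?_⟩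
  have hint : ∫ s in Ioi 0, ‖(snowflakeFun p t - snowflakeFun p u) s‖ ^ 2 = |t - u| ^ p * K := by
    rw [← integral_snowflakeKernel_mul hp0 (abs_nonneg _)]
    exact setIntegral_congr_fun measurableSet_Ioi fun s hs => norm_snowflakeFun_sub_sq t u hs
  rw [← smul_sub, ← MemLp.toLp_sub, norm_smul, mul_pow, MemLp.norm_toLp_sq, hint, norm_inv,
    Real.norm_of_nonneg (Real.sqrt_nonneg _), inv_pow, Real.sq_sqrt hK.le]
  field_simp

lemma exists_hilbert_norm_sub_sq_eq_rpow (hp0 : 0 < p) (hp2 : p ≤ 2) :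
    ∃ (E : Type) (_ : NormedAddCommGroup E) (_ : InnerProductSpace ℝ E) (_ : CompleteSpace E)
      (f : ℝ → E), f 0 = 0 ∧ ∀ t u, ‖f t - f u‖ ^ 2 = |t - u| ^ p := by
  suffices ∃ (E : Type) (_ : NormedAddCommGroup E) (_ : InnerProductSpace ℝ E)
      (_ : CompleteSpace E) (f : ℝ → E), ∀ t u, ‖f t - f u‖ ^ 2 = |t - u| ^ p by
    obtain ⟨E, _, _, _, f, hf⟩ := this
    exact ⟨E, inferInstance, inferInstance, inferInstance, fun t => f t - f 0, sub_self _,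
      fun t u => by simpa using hf t u⟩
  obtain rfl | hp2 := hp2.eq_or_lt
  · exact ⟨ℝ, inferInstance, inferInstance, inferInstance, id, fun t u => by simp⟩
  · obtain ⟨f, hf⟩ := exists_L2_norm_sub_sq_eq_rpow hp0 hp2
    exact ⟨_, inferInstance, inferInstance, inferInstance, f, hf⟩

end

/-- For `1 ≤ p ≤ 2`, there is a real Hilbert space `H` and a map
`S : ℓ_p → H` with `‖S x - S y‖ = ‖x - y‖_p ^ (p/2)` for all `x, y ∈ ℓ_p`;
i.e. the `(p/2)`-snowflake of `ℓ_p` embeds isometrically into a Hilbert space. -/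
theorem snowflake_embedding_of_lp_into_Hilbert
    (p : ℝ) (hp1 : 1 ≤ p) (hp2 : p ≤ 2) :
    ∃ (H : Type) (_ : NormedAddCommGroup H) (_ : InnerProductSpace ℝ H)
      (_ : CompleteSpace H) (S : lp (fun _ : ℕ => ℝ) (ENNReal.ofReal p) → H),
      ∀ x y : lp (fun _ : ℕ => ℝ) (ENNReal.ofReal p),
        ‖S x - S y‖ = ‖x - y‖ ^ (p / 2) := by
  have hp0 : 0 < p := by linarith
  obtain ⟨E, _, _, _, f, hf0, hf⟩ := exists_hilbert_norm_sub_sq_eq_rpow hp0 hp2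
  have hpr : (ENNReal.ofReal p).toReal = p := ENNReal.toReal_ofReal hp0.le
  obtain ⟨S, hS⟩ := lp.exists_map_norm_sub_eq_rpow (ι := ℕ) (r := 2)
    (hpr.symm ▸ hp0) (by simp) f hf0 (by simpa [hpr, Real.rpow_two] using hf)
  exact ⟨lp (fun _ : ℕ => E) 2, inferInstance, inferInstance, inferInstance, S,
    by simpa [hpr] using hS⟩
end

section
/- (Variant of Austin's lemma.) Let 0 < r ≤ 1 and let X be a real vector space equipped with a metric d_X that is translation-invariant (d_X(x+z, y+z) = d_X(x,y) for all x,y,z ∈ X) and r-homogeneous (d_X(λx, λy) = |λ|^r d_X(x,y) for all λ ∈ ℝ and x,y ∈ X). Let Y be a real normed space. Let d₀ > 0, γ ∈ (0,1], η ∈ (0,1], and A, B, K > 0, and let (M_n, δ_n), n ∈ ℕ, be finite metric spaces such that: (i) each M_n is d₀-discrete, i.e. δ_n(x,y) ≥ d₀ whenever x ≠ y; (ii) diam(M_n) → ∞ as n → ∞; (iii) for each n there is a map f_n : M_n → X with A·δ_n(x,y)^γ ≤ d_X(f_n(x), f_n(y)) ≤ B·δ_n(x,y) for all x, y ∈ M_n;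 (iv) for each n, every injective map g : M_n → Y and all constants A', B' > 0 satisfying A'·δ_n(x,y) ≤ ‖g(x) − g(y)‖_Y ≤ B'·δ_n(x,y) for all x, y ∈ M_n satisfy B'/A' ≥ K·diam(M_n)^η. Then for every α > 0 for which there exist a map T : X → Y, constants A'' > 0 and B'' ≥ 0 with ‖T(x) − T(y)‖_Y ≤ A''·d_X(x,y) + B'' for all x, y ∈ X, and constants C, t > 0 with ‖T(x) − T(y)‖_Y ≥ C·d_X(x,y)^α whenever d_X(x,y) ≥ t, one has α ≤ (1 − η)/γ. -/
/-- Auxiliary: if `D ≥ (c+1)^(1/p)` with `c ≥ 0`, `p > 0`, then `D^p ≥ c+1`. -/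
lemma austin_aux_rpow_ge (c p D : ℝ) (hc : 0 ≤ c) (hp : 0 < p)
    (hD : (c + 1) ^ (1 / p) ≤ D) : c + 1 ≤ D ^ p := by
  have h0 : (0:ℝ) ≤ c + 1 := by linarith
  have h := Real.rpow_le_rpow (Real.rpow_nonneg h0 _) hD hp.le
  rwa [← Real.rpow_mul h0, one_div, inv_mul_cancel₀ hp.ne', Real.rpow_one] at h

/-- variant of Austin's lemma: Let `0 < r ≤ 1`, let `X` be a real vector
space with a translation-invariant, `r`-homogeneous metric `dX`, and let `Y` be a real
normed space. Suppose `(Mₙ, δₙ)` are finite `d₀`-discrete metric spaces with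
`diam Mₙ → ∞`, admitting maps `fₙ : Mₙ → X` with
`A·δₙ(x,y)^γ ≤ dX(fₙ x, fₙ y) ≤ B·δₙ(x,y)`, and such that every bi-Lipschitz copy of
`Mₙ` in `Y` has distortion at least `K·(diam Mₙ)^η`. Then any `α > 0` admitting a
large-scale Lipschitz map `T : X → Y` with `‖T x - T y‖ ≥ C·dX(x,y)^α` whenever
`dX(x,y) ≥ t` satisfies `α ≤ (1-η)/γ`. -/
theorem austin_lemma_variant
    (r : ℝ) (hr0 : 0 < r) (hr1 : r ≤ 1)
    (X : Type) [AddCommGroup X] [Module ℝ X] (dX : X → X → ℝ)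
    (hd_eq : ∀ x y : X, dX x y = 0 ↔ x = y)
    (hd_symm : ∀ x y : X, dX x y = dX y x)
    (hd_tri : ∀ x y z : X, dX x z ≤ dX x y + dX y z)
    (hd_inv : ∀ x y z : X, dX (x + z) (y + z) = dX x y)
    (hd_hom : ∀ (l : ℝ) (x y : X), dX (l • x) (l • y) = |l| ^ r * dX x y)
    (Y : Type) [NormedAddCommGroup Y] [NormedSpace ℝ Y]
    (d₀ : ℝ) (hd₀ : 0 < d₀)
    (γ : ℝ) (hγ0 : 0 < γ) (hγ1 : γ ≤ 1)
    (η : ℝ) (hη0 : 0 < η) (hη1 : η ≤ 1)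
    (A B K : ℝ) (hA : 0 < A) (hB : 0 < B) (hK : 0 < K)
    (M : ℕ → Type) [∀ n, MetricSpace (M n)] [∀ n, Fintype (M n)]
    (hdisc : ∀ (n : ℕ) (x y : M n), x ≠ y → d₀ ≤ dist x y)
    (hdiam : Filter.Tendsto (fun n => Metric.diam (Set.univ : Set (M n)))
      Filter.atTop Filter.atTop)
    (hf : ∀ n : ℕ, ∃ f : M n → X, ∀ x y : M n,
      A * dist x y ^ γ ≤ dX (f x) (f y) ∧ dX (f x) (f y) ≤ B * dist x y)
    (hdistortion : ∀ (n : ℕ) (g : M n → Y), Function.Injective g →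
      ∀ A' B' : ℝ, 0 < A' → 0 < B' →
      (∀ x y : M n, A' * dist x y ≤ ‖g x - g y‖ ∧ ‖g x - g y‖ ≤ B' * dist x y) →
      K * Metric.diam (Set.univ : Set (M n)) ^ η ≤ B' / A')
    (α : ℝ) (hα : 0 < α)
    (T : X → Y) (A'' B'' : ℝ) (hA'' : 0 < A'') (hB'' : 0 ≤ B'')
    (hT_up : ∀ x y : X, ‖T x - T y‖ ≤ A'' * dX x y + B'')
    (C t : ℝ) (hC : 0 < C) (ht : 0 < t)
    (hT_low : ∀ x y : X, t ≤ dX x y → C * dX x y ^ α ≤ ‖T x - T y‖) :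
    α ≤ (1 - η) / γ := by
  by_contra hcon
  push_neg at hcon
  have hγα : 1 - η < γ * α := by
    rw [div_lt_iff₀ hγ0] at hcon; nlinarith
  -- nonnegativity of dX
  have hdX_self : ∀ x : X, dX x x = 0 := fun x => (hd_eq x x).mpr rfl
  have hdX_nonneg : ∀ x y : X, 0 ≤ dX x y := by
    intro x y
    have h1 := hd_tri x y x
    have h2 := hd_symm x y
    rw [hdX_self x] at h1; linarith
  -- choose the scaling factor l
  have hAd : 0 < A * d₀ ^ γ := mul_pos hA (Real.rpow_pos_of_pos hd₀ γ)
  obtain ⟨l, hl1, hlr⟩ : ∃ l : ℝ, 1 ≤ l ∧ t ≤ l ^ r * (A * d₀ ^ γ) := by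
    refine ⟨max 1 ((t / (A * d₀ ^ γ) + 1) ^ (1 / r)), le_max_left _ _, ?_⟩
    have hc : 0 ≤ t / (A * d₀ ^ γ) := (div_pos ht hAd).le
    have h := austin_aux_rpow_ge (t / (A * d₀ ^ γ)) r
      (max 1 ((t / (A * d₀ ^ γ) + 1) ^ (1 / r))) hc hr0 (le_max_right _ _)
    have htc : t / (A * d₀ ^ γ) ≤ (max 1 ((t / (A * d₀ ^ γ) + 1) ^ (1 / r))) ^ r := by
      linarith
    calc t = t / (A * d₀ ^ γ) * (A * d₀ ^ γ) := by field_simp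
      _ ≤ _ := by
          apply mul_le_mul_of_nonneg_right htc hAd.le
  have hl0 : (0:ℝ) < l := lt_of_lt_of_le one_pos hl1
  set L : ℝ := l ^ r with hLdef
  have hL0 : 0 < L := Real.rpow_pos_of_pos hl0 r
  set Lα : ℝ := L ^ α with hLαdef
  have hLα0 : 0 < Lα := Real.rpow_pos_of_pos hL0 α
  set Aα : ℝ := A ^ α with hAαdef
  have hAα0 : 0 < Aα := Real.rpow_pos_of_pos hA α
  -- the two constants
  set B' : ℝ := A'' * L * B + B'' / d₀ with hB'def
  have hB'0 : 0 < B' := by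
    have : 0 ≤ B'' / d₀ := div_nonneg hB'' hd₀.le
    have := mul_pos (mul_pos hA'' hL0) hB
    positivity
  set P : ℝ := B' / (C * Lα * Aα) with hPdef
  have hP0 : 0 < P := div_pos hB'0 (by positivity)
  set e : ℝ := 1 - γ * α with hedef
  have heη : e < η := by simp only [hedef]; linarith
  have hde : 0 < d₀ ^ e := Real.rpow_pos_of_pos hd₀ e
  -- pick n with large diameter
  set R : ℝ := max 1 (max ((P * d₀ ^ e / K + 1) ^ (1 / η))
      ((P / K + 1) ^ (1 / (η - e)))) with hRdef
  obtain ⟨n, hn⟩ := (hdiam.eventually (Filter.eventually_ge_atTop R)).exists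
  set D : ℝ := Metric.diam (Set.univ : Set (M n)) with hDdef
  have hD1 : (1:ℝ) ≤ D := le_trans (le_max_left _ _) hn
  have hD0 : (0:ℝ) < D := lt_of_lt_of_le one_pos hD1
  -- the two threshold inequalities
  have hth1 : P * d₀ ^ e < K * D ^ η := by
    have h := austin_aux_rpow_ge (P * d₀ ^ e / K) η D (by positivity) hη0
      (le_trans (le_trans (le_max_left _ _) (le_max_right _ _)) hn)
    have h2 : P * d₀ ^ e / K < D ^ η := by linarith
    calc P * d₀ ^ e = K * (P * d₀ ^ e / K) := by field_simp
      _ < K * D ^ η := by exact mul_lt_mul_of_pos_left h2 hK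
  have hth2 : P * D ^ e < K * D ^ η := by
    have h := austin_aux_rpow_ge (P / K) (η - e) D (by positivity) (by linarith)
      (le_trans (le_trans (le_max_right _ _) (le_max_right _ _)) hn)
    have h2 : P < K * D ^ (η - e) := by
      have : P / K < D ^ (η - e) := by linarith
      calc P = K * (P / K) := by field_simp
        _ < K * D ^ (η - e) := mul_lt_mul_of_pos_left this hK
    have hsplit : D ^ η = D ^ (η - e) * D ^ e := by
      rw [← Real.rpow_add hD0]; ring_nf
    calc P * D ^ e < K * D ^ (η - e) * D ^ e :=
          mul_lt_mul_of_pos_right h2 (Real.rpow_pos_of_pos hD0 e)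
      _ = K * D ^ η := by rw [hsplit]; ring
  -- get the embedding f
  obtain ⟨f, hfb⟩ := hf n
  set g : M n → Y := fun x => T (l • f x) with hgdef
  -- scaling identity
  have hscale : ∀ x y : M n, dX (l • f x) (l • f y) = L * dX (f x) (f y) := by
    intro x y
    rw [hd_hom l (f x) (f y), abs_of_pos hl0]
  -- distances within M n
  have hdle : ∀ x y : M n, dist x y ≤ D :=
    fun x y => Metric.dist_le_diam_of_mem Set.finite_univ.isBounded
      (Set.mem_univ x) (Set.mem_univ y)
  -- key lower bound on dX between scaled image points
  have hkey : ∀ x y : M n, x ≠ y → t ≤ dX (l • f x) (l • f y) := by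
    intro x y hxy
    rw [hscale]
    have h1 : d₀ ^ γ ≤ dist x y ^ γ :=
      Real.rpow_le_rpow hd₀.le (hdisc n x y hxy) hγ0.le
    have h2 : A * d₀ ^ γ ≤ dX (f x) (f y) :=
      le_trans (mul_le_mul_of_nonneg_left h1 hA.le) (hfb x y).1
    calc t ≤ L * (A * d₀ ^ γ) := hlr
      _ ≤ L * dX (f x) (f y) := mul_le_mul_of_nonneg_left h2 hL0.le
  -- injectivity of g
  have hinj : Function.Injective g := by
    intro x y hxy
    by_contra hne
    have h1 := hT_low (l • f x) (l • f y) (hkey x y hne)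
    have h2 : ‖g x - g y‖ = 0 := by rw [hxy, sub_self, norm_zero]
    have h3 : 0 < C * dX (l • f x) (l • f y) ^ α := by
      have : 0 < dX (l • f x) (l • f y) := lt_of_lt_of_le ht (hkey x y hne)
      positivity
    simp only [hgdef] at h2
    rw [h2] at h1
    linarith
  -- upper bound
  have hupper : ∀ x y : M n, ‖g x - g y‖ ≤ B' * dist x y := by
    intro x y
    by_cases hxy : x = y
    · subst hxy; simp
    · have h1 := hT_up (l • f x) (l • f y)
      rw [hscale] at h1
      have h2 : dX (f x) (f y) ≤ B * dist x y := (hfb x y).2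
      have h3 : d₀ ≤ dist x y := hdisc n x y hxy
      have h4 : B'' ≤ B'' / d₀ * dist x y := by
        rw [div_mul_eq_mul_div, le_div_iff₀ hd₀]
        exact mul_le_mul_of_nonneg_left h3 hB''
      have h5 : A'' * (L * dX (f x) (f y)) ≤ A'' * L * B * dist x y := by
        have h6 := mul_le_mul_of_nonneg_left h2 (mul_pos hA'' hL0).le
        calc A'' * (L * dX (f x) (f y)) = A'' * L * dX (f x) (f y) := by ring
          _ ≤ A'' * L * (B * dist x y) := h6
          _ = A'' * L * B * dist x y := by ring
      calc ‖g x - g y‖ ≤ A'' * (L * dX (f x) (f y)) + B'' := h1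
        _ ≤ A'' * L * B * dist x y + B'' / d₀ * dist x y := add_le_add h5 h4
        _ = B' * dist x y := by rw [hB'def]; ring
  -- the factor m and lower bound
  set w : ℝ := γ * α - 1 with hwdef
  set m : ℝ := if 0 ≤ w then d₀ ^ w else D ^ w with hmdef
  have hm0 : 0 < m := by
    rw [hmdef]
    split
    · exact Real.rpow_pos_of_pos hd₀ w
    · exact Real.rpow_pos_of_pos hD0 w
  have hmδ : ∀ δ : ℝ, d₀ ≤ δ → δ ≤ D → m ≤ δ ^ w := by
    intro δ h1 h2
    rw [hmdef]
    split
    · exact Real.rpow_le_rpow hd₀.le h1 (by assumption)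
    · exact Real.rpow_le_rpow_of_nonpos (lt_of_lt_of_le hd₀ h1) h2 (by linarith)
  set A' : ℝ := C * Lα * Aα * m with hA'def
  have hA'0 : 0 < A' := by positivity
  have hlower : ∀ x y : M n, A' * dist x y ≤ ‖g x - g y‖ := by
    intro x y
    by_cases hxy : x = y
    · subst hxy; simp
    · have hδ0 : 0 < dist x y := lt_of_lt_of_le hd₀ (hdisc n x y hxy)
      have h1 := hT_low (l • f x) (l • f y) (hkey x y hxy)
      rw [hscale] at h1
      have h2 : L * (A * dist x y ^ γ) ≤ L * dX (f x) (f y) :=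
        mul_le_mul_of_nonneg_left (hfb x y).1 hL0.le
      have h3 : (L * (A * dist x y ^ γ)) ^ α ≤ (L * dX (f x) (f y)) ^ α :=
        Real.rpow_le_rpow (by positivity) h2 hα.le
      have h4 : (L * (A * dist x y ^ γ)) ^ α = Lα * Aα * dist x y ^ (γ * α) := by
        rw [Real.mul_rpow hL0.le (by positivity), Real.mul_rpow hA.le (by positivity),
          ← Real.rpow_mul hδ0.le, hLαdef, hAαdef]
        ring
      have h5 : dist x y ^ (γ * α) = dist x y ^ w * dist x y := by
        have : γ * α = w + 1 := by rw [hwdef]; ring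
        rw [this, Real.rpow_add hδ0, Real.rpow_one]
      have h6 : m * dist x y ≤ dist x y ^ (γ * α) := by
        rw [h5]
        exact mul_le_mul_of_nonneg_right
          (hmδ (dist x y) (hdisc n x y hxy) (hdle x y)) hδ0.le
      calc A' * dist x y = C * (Lα * Aα * (m * dist x y)) := by rw [hA'def]; ring
        _ ≤ C * (Lα * Aα * dist x y ^ (γ * α)) := by
            apply mul_le_mul_of_nonneg_left _ hC.le
            exact mul_le_mul_of_nonneg_left h6 (by positivity)
        _ = C * (L * (A * dist x y ^ γ)) ^ α := by rw [h4]
        _ ≤ C * (L * dX (f x) (f y)) ^ α := mul_le_mul_of_nonneg_left h3 hC.le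
        _ ≤ ‖g x - g y‖ := h1
  -- apply the distortion hypothesis
  have hdist := hdistortion n g hinj A' B' hA'0 hB'0
    (fun x y => ⟨hlower x y, hupper x y⟩)
  rw [← hDdef] at hdist
  -- B' / A' = P / m
  have hBA : B' / A' = P / m := by
    rw [hA'def, hPdef]
    field_simp
  rw [hBA] at hdist
  -- final contradiction
  rw [hmdef] at hdist
  by_cases hw : 0 ≤ w
  · rw [if_pos hw] at hdist
    have : P / d₀ ^ w = P * d₀ ^ e := by
      rw [div_eq_mul_inv, ← Real.rpow_neg hd₀.le]
      congr 1
      rw [hedef, hwdef]; ring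
    rw [this] at hdist
    linarith
  · rw [if_neg hw] at hdist
    have : P / D ^ w = P * D ^ e := by
      rw [div_eq_mul_inv, ← Real.rpow_neg hD0.le]
      congr 1
      rw [hedef, hwdef]; ring
    rw [this] at hdist
    linarith
end

section
/- Every real inner product space H has Enflo type 2 with constant 1: for every n ∈ ℕ and every map f : {−1,1}^n → H one has Σ_{ε ∈ {−1,1}^n} ‖f(ε) − f(−ε)‖² ≤ Σ_{i=1}^n Σ_{ε ∈ {−1,1}^n} ‖f(ε) − f(ε^i)‖², where ε^i denotes ε with the i-th coordinate replaced by −ε_i. -/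
/-- Short-diagonals lemma in an inner product space: the sum of the squares of the diagonals
of a quadrilateral is at most the sum of the squares of its sides. -/
private lemma quad_ineq {H : Type} [NormedAddCommGroup H] [InnerProductSpace ℝ H]
    (a b c d : H) :
    ‖a - c‖ ^ 2 + ‖b - d‖ ^ 2 ≤
      ‖a - b‖ ^ 2 + ‖b - c‖ ^ 2 + ‖c - d‖ ^ 2 + ‖d - a‖ ^ 2 := by
  have key : ‖a - b‖ ^ 2 + ‖b - c‖ ^ 2 + ‖c - d‖ ^ 2 + ‖d - a‖ ^ 2
      - ‖a - c‖ ^ 2 - ‖b - d‖ ^ 2 = ‖a - b + c - d‖ ^ 2 := by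
    simp only [← real_inner_self_eq_norm_sq]
    simp only [inner_sub_left, inner_sub_right, inner_add_left, inner_add_right]
    linarith [real_inner_comm a b, real_inner_comm a c, real_inner_comm a d,
      real_inner_comm b c, real_inner_comm b d, real_inner_comm c d]
  linarith [sq_nonneg ‖a - b + c - d‖, key]

/-- Splitting a sum over the `(n+1)`-cube according to the first coordinate. -/
private lemma sum_cube_succ {n : ℕ} (F : (Fin (n + 1) → Bool) → ℝ) :
    ∑ ε : Fin (n + 1) → Bool, F ε =
      (∑ ε : Fin n → Bool, F (Fin.cons true ε)) +
        ∑ ε : Fin n → Bool, F (Fin.cons false ε) := by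
  rw [← (Fin.consEquiv (fun _ : Fin (n + 1) => Bool)).sum_comp F]
  rw [Fintype.sum_prod_type, Fintype.sum_bool]
  rfl

/-- Reindexing a sum over the cube by coordinatewise negation. -/
private lemma sum_cube_neg {n : ℕ} (F : (Fin n → Bool) → ℝ) :
    ∑ ε : Fin n → Bool, F (fun i => !(ε i)) = ∑ ε : Fin n → Bool, F ε := by
  have hinv : Function.Involutive (fun (ε : Fin n → Bool) i => !(ε i)) := by
    intro ε; funext i; simp
  exact Function.Bijective.sum_comp hinv.bijective F

/-- Every real inner product space `H` has Enflo type 2 with constant 1: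
for every `n` and every `f : {-1,1}^n → H`,
`∑_ε ‖f ε - f (-ε)‖² ≤ ∑_{i=1}^n ∑_ε ‖f ε - f (ε^i)‖²`,
where `ε^i` is `ε` with the `i`-th coordinate negated. The cube `{-1,1}^n` is modelled
as `Fin n → Bool`, with coordinatewise negation and coordinate flips. -/
theorem inner_product_space_enflo_type_two
    (H : Type) [NormedAddCommGroup H] [InnerProductSpace ℝ H]
    (n : ℕ) (f : (Fin n → Bool) → H) :
    ∑ ε : Fin n → Bool, ‖f ε - f (fun i => !(ε i))‖ ^ 2 ≤
      ∑ i : Fin n, ∑ ε : Fin n → Bool, ‖f ε - f (Function.update ε i (!(ε i)))‖ ^ 2 := by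
  induction n with
  | zero =>
    have h0 : ∀ ε : Fin 0 → Bool, (fun i => !(ε i)) = ε := fun ε => funext fun i => i.elim0
    simp [h0]
  | succ n ih =>
    classical
    set neg : (Fin n → Bool) → (Fin n → Bool) := fun ε i => !(ε i) with hnegdef
    set g : (Fin n → Bool) → H := fun ε => f (Fin.cons true ε) with hgdef
    set h : (Fin n → Bool) → H := fun ε => f (Fin.cons false ε) with hhdef
    have hcons_true : ∀ ε : Fin n → Bool,
        (fun i => !((Fin.cons true ε : Fin (n+1) → Bool) i)) = Fin.cons false (neg ε) := by
      intro ε; funext i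
      refine Fin.cases ?_ (fun j => ?_) i <;> simp [hnegdef]
    have hcons_false : ∀ ε : Fin n → Bool,
        (fun i => !((Fin.cons false ε : Fin (n+1) → Bool) i)) = Fin.cons true (neg ε) := by
      intro ε; funext i
      refine Fin.cases ?_ (fun j => ?_) i <;> simp [hnegdef]
    -- Left-hand side split
    have hLHS : ∑ ε : Fin (n + 1) → Bool, ‖f ε - f (fun i => !(ε i))‖ ^ 2
        = (∑ ε : Fin n → Bool, ‖g ε - h (neg ε)‖ ^ 2) +
            ∑ ε : Fin n → Bool, ‖h ε - g (neg ε)‖ ^ 2 := by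
      rw [sum_cube_succ (fun ε => ‖f ε - f (fun i => !(ε i))‖ ^ 2)]
      congr 1
      · exact Finset.sum_congr rfl fun ε _ => by rw [hcons_true ε]
      · exact Finset.sum_congr rfl fun ε _ => by rw [hcons_false ε]
    -- The `i = 0` term of the right-hand side
    have hA0 : ∑ ε : Fin (n + 1) → Bool,
          ‖f ε - f (Function.update ε 0 (!(ε 0)))‖ ^ 2
        = 2 * ∑ ε : Fin n → Bool, ‖g ε - h ε‖ ^ 2 := by
      rw [sum_cube_succ (fun ε => ‖f ε - f (Function.update ε 0 (!(ε 0)))‖ ^ 2)]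
      have h1 : ∀ ε : Fin n → Bool,
          Function.update (Fin.cons true ε) 0 (!((Fin.cons true ε : Fin (n+1) → Bool) 0)) =
            (Fin.cons false ε : Fin (n + 1) → Bool) := by
        intro ε; rw [Fin.cons_zero, Fin.update_cons_zero]; rfl
      have h2 : ∀ ε : Fin n → Bool,
          Function.update (Fin.cons false ε) 0 (!((Fin.cons false ε : Fin (n+1) → Bool) 0)) =
            (Fin.cons true ε : Fin (n + 1) → Bool) := by
        intro ε; rw [Fin.cons_zero, Fin.update_cons_zero]; rfl
      have e1 : ∑ ε : Fin n → Bool,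
          ‖f (Fin.cons true ε) -
            f (Function.update (Fin.cons true ε) 0 (!((Fin.cons true ε : Fin (n+1) → Bool) 0)))‖ ^ 2
          = ∑ ε : Fin n → Bool, ‖g ε - h ε‖ ^ 2 :=
        Finset.sum_congr rfl fun ε _ => by rw [h1 ε]
      have e2 : ∑ ε : Fin n → Bool,
          ‖f (Fin.cons false ε) -
            f (Function.update (Fin.cons false ε) 0 (!((Fin.cons false ε : Fin (n+1) → Bool) 0)))‖ ^ 2
          = ∑ ε : Fin n → Bool, ‖g ε - h ε‖ ^ 2 :=
        Finset.sum_congr rfl fun ε _ => by rw [h2 ε, hgdef, hhdef]; rw [norm_sub_rev]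
      rw [e1, e2]; ring
    -- The `i = i.succ` terms of the right-hand side
    have hAsucc : ∀ i : Fin n, ∑ ε : Fin (n + 1) → Bool,
          ‖f ε - f (Function.update ε i.succ (!(ε i.succ)))‖ ^ 2
        = (∑ ε : Fin n → Bool, ‖g ε - g (Function.update ε i (!(ε i)))‖ ^ 2) +
            ∑ ε : Fin n → Bool, ‖h ε - h (Function.update ε i (!(ε i)))‖ ^ 2 := by
      intro i
      rw [sum_cube_succ (fun ε => ‖f ε - f (Function.update ε i.succ (!(ε i.succ)))‖ ^ 2)]
      congr 1
      · refine Finset.sum_congr rfl fun ε _ => ?_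
        rw [Fin.cons_succ, ← Fin.cons_update]
      · refine Finset.sum_congr rfl fun ε _ => ?_
        rw [Fin.cons_succ, ← Fin.cons_update]
    -- Pointwise quadrilateral inequality, summed
    have hquad : (∑ ε : Fin n → Bool, ‖g ε - h (neg ε)‖ ^ 2) +
          ∑ ε : Fin n → Bool, ‖h ε - g (neg ε)‖ ^ 2
        ≤ (∑ ε : Fin n → Bool, ‖g ε - g (neg ε)‖ ^ 2) +
            (∑ ε : Fin n → Bool, ‖h ε - h (neg ε)‖ ^ 2) +
            2 * ∑ ε : Fin n → Bool, ‖g ε - h ε‖ ^ 2 := by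
      have step : ∀ ε : Fin n → Bool,
          ‖g ε - h (neg ε)‖ ^ 2 + ‖h ε - g (neg ε)‖ ^ 2 ≤
            ‖g ε - g (neg ε)‖ ^ 2 + ‖g (neg ε) - h (neg ε)‖ ^ 2 +
              ‖h ε - h (neg ε)‖ ^ 2 + ‖g ε - h ε‖ ^ 2 := by
        intro ε
        have := quad_ineq (g ε) (g (neg ε)) (h (neg ε)) (h ε)
        rw [norm_sub_rev (g (neg ε)) (h ε), norm_sub_rev (h (neg ε)) (h ε),
          norm_sub_rev (h ε) (g ε)] at this
        linarith
      have hsum := Finset.sum_le_sum fun ε (_ : ε ∈ Finset.univ) => step ε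
      rw [Finset.sum_add_distrib] at hsum
      have hre : ∑ ε : Fin n → Bool, ‖g (neg ε) - h (neg ε)‖ ^ 2
          = ∑ ε : Fin n → Bool, ‖g ε - h ε‖ ^ 2 :=
        sum_cube_neg (fun ε => ‖g ε - h ε‖ ^ 2)
      calc (∑ ε : Fin n → Bool, ‖g ε - h (neg ε)‖ ^ 2) +
              ∑ ε : Fin n → Bool, ‖h ε - g (neg ε)‖ ^ 2
          ≤ ∑ ε : Fin n → Bool, (‖g ε - g (neg ε)‖ ^ 2 + ‖g (neg ε) - h (neg ε)‖ ^ 2 +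
              ‖h ε - h (neg ε)‖ ^ 2 + ‖g ε - h ε‖ ^ 2) := hsum
        _ = (∑ ε : Fin n → Bool, ‖g ε - g (neg ε)‖ ^ 2) +
              (∑ ε : Fin n → Bool, ‖h ε - h (neg ε)‖ ^ 2) +
              2 * ∑ ε : Fin n → Bool, ‖g ε - h ε‖ ^ 2 := by
            simp only [Finset.sum_add_distrib]; rw [hre]; ring
    -- Combine everything
    rw [hLHS, Fin.sum_univ_succ, hA0]
    have hRHS : ∑ i : Fin n, ∑ ε : Fin (n + 1) → Bool,
          ‖f ε - f (Function.update ε i.succ (!(ε i.succ)))‖ ^ 2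
        = (∑ i : Fin n, ∑ ε : Fin n → Bool,
              ‖g ε - g (Function.update ε i (!(ε i)))‖ ^ 2) +
            ∑ i : Fin n, ∑ ε : Fin n → Bool,
              ‖h ε - h (Function.update ε i (!(ε i)))‖ ^ 2 := by
      rw [← Finset.sum_add_distrib]
      exact Finset.sum_congr rfl fun i _ => hAsucc i
    rw [hRHS]
    have ihg := ih g
    have ihh := ih h
    have hgneg : ∑ ε : Fin n → Bool, ‖g ε - g (fun i => !(ε i))‖ ^ 2
        = ∑ ε : Fin n → Bool, ‖g ε - g (neg ε)‖ ^ 2 := rfl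
    have hhneg : ∑ ε : Fin n → Bool, ‖h ε - h (fun i => !(ε i))‖ ^ 2
        = ∑ ε : Fin n → Bool, ‖h ε - h (neg ε)‖ ^ 2 := rfl
    rw [hgneg] at ihg
    rw [hhneg] at ihh
    linarith
end

section
/- Let 1 ≤ p ≤ 2, let H be a real Hilbert space, and let α > 0. Suppose T : ℓ_p → H is large-scale Lipschitz, i.e. there exist A > 0 and B ≥ 0 with ‖T(x) − T(y)‖_H ≤ A·‖x − y‖_p + B for all x, y ∈ ℓ_p, and suppose there exist constants C, t > 0 such that ‖T(x) − T(y)‖_H ≥ C·‖x − y‖_p^α whenever ‖x − y‖_p ≥ t. Then α ≤ p/2. In particular, the Hilbert space compression exponent of ℓ_p is at most p/2. -/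
/-!
Enflo's argument. For any map `f` from the Hamming cube `{0,1}ⁿ` to a Hilbert space, the sum of
the squared diagonals `‖f x - f xᶜ‖²` is at most the sum of the squared edges; this follows by
induction on `n` from the quadrilateral inequality `‖a - c‖² + ‖b - d‖² ≤ ‖a - b‖² + ‖b - c‖² +
‖c - d‖² + ‖d - a‖²`. In `ℓ_p` the cube of side `t` has edges of length `t` and diagonals of length
`t n^{1/p}`, so the two bounds on `T` give `C² t^{2α} n^{2α/p} ≤ n (A t + B)²` for every `n`,
which forces `2α/p ≤ 1`.
-/

open Finset
open scoped ENNReal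

theorem Fin.compl_cons {n : ℕ} {α : Type*} [Compl α] (b : α) (y : Fin n → α) :
    (Fin.cons b y : Fin (n + 1) → α)ᶜ = Fin.cons bᶜ yᶜ := by
  funext i
  refine Fin.cases ?_ (fun j => ?_) i <;> simp

theorem hammingDist_update_of_ne {ι β : Type*} [Fintype ι] [DecidableEq ι] [DecidableEq β]
    (x : ι → β) {i : ι} {b : β} (hb : b ≠ x i) : hammingDist x (Function.update x i b) = 1 := by
  rw [hammingDist, card_eq_one]
  refine ⟨i, ?_⟩
  ext j
  by_cases h : j = i <;> simp [h, hb.symm]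

theorem hammingDist_compl {ι : Type*} [Fintype ι] (x : ι → Bool) :
    hammingDist x xᶜ = Fintype.card ι := by
  simp [hammingDist]

theorem norm_sub_sq_add_norm_sub_sq_le {H : Type*} [SeminormedAddCommGroup H]
    [InnerProductSpace ℝ H] (a b c d : H) :
    ‖a - c‖ ^ 2 + ‖b - d‖ ^ 2 ≤ ‖a - b‖ ^ 2 + ‖b - c‖ ^ 2 + ‖c - d‖ ^ 2 + ‖d - a‖ ^ 2 := by
  have defect : ‖a - b‖ ^ 2 + ‖b - c‖ ^ 2 + ‖c - d‖ ^ 2 + ‖d - a‖ ^ 2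
      - (‖a - c‖ ^ 2 + ‖b - d‖ ^ 2) = ‖a - b + c - d‖ ^ 2 := by
    simp only [← real_inner_self_eq_norm_sq, inner_sub_left, inner_sub_right, inner_add_left,
      inner_add_right, real_inner_comm]
    ring
  nlinarith [sq_nonneg ‖a - b + c - d‖]

theorem lp.norm_sum_single_fin {E : Type*} [NormedAddCommGroup E] {p : ℝ≥0∞}
    (hp : 0 < p.toReal) {n : ℕ} (g : Fin n → E) :
    ‖(∑ i : Fin n, lp.single p (i : ℕ) (g i) : lp (fun _ : ℕ => E) p)‖ ^ p.toReal
      = ∑ i, ‖g i‖ ^ p.toReal := by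
  set f : ℕ → E := fun j => if h : j < n then g ⟨j, h⟩ else 0
  have hf (i : Fin n) : f i = g i := dif_pos i.isLt
  simpa only [← Fin.sum_univ_eq_sum_range, hf] using lp.norm_sum_single hp f (range n)

theorem le_of_forall_mul_rpow_le_mul_rpow {c K r s : ℝ} (hc : 0 < c)
    (h : ∀ n : ℕ, 1 ≤ n → c * (n : ℝ) ^ r ≤ K * (n : ℝ) ^ s) : r ≤ s := by
  by_contra! hsr
  have unbounded := (tendsto_rpow_atTop (sub_pos.2 hsr)).comp tendsto_natCast_atTop_atTop
  obtain ⟨n, hn, hlarge⟩ :=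
    ((tendsto_natCast_atTop_atTop.eventually_ge_atTop 1).and
      (unbounded.eventually_gt_atTop (K / c))).exists
  have hn0 : (0 : ℝ) < n := by exact_mod_cast hn
  rw [Function.comp_apply, Real.rpow_sub hn0, div_lt_div_iff₀ hc (by positivity)] at hlarge
  linarith [h n hn]

namespace BoolCube

variable {n : ℕ}

section Enflo

variable {H : Type*} [SeminormedAddCommGroup H]

noncomputable def diagSum (f : (Fin n → Bool) → H) : ℝ :=
  ∑ x, ‖f x - f xᶜ‖ ^ 2

noncomputable def edgeSum (f : (Fin n → Bool) → H) : ℝ :=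
  ∑ x, ∑ i, ‖f x - f (Function.update x i (!x i))‖ ^ 2

theorem sum_succ {M : Type*} [AddCommMonoid M] (F : (Fin (n + 1) → Bool) → M) :
    ∑ x, F x = ∑ y, F (Fin.cons true y) + ∑ y, F (Fin.cons false y) := by
  rw [← Fintype.sum_equiv (Fin.consEquiv fun _ => Bool) (fun z => F (Fin.cons z.1 z.2)) F
    fun _ => rfl, Fintype.sum_prod_type, Fintype.sum_bool]

theorem diagSum_succ (f : (Fin (n + 1) → Bool) → H) :
    diagSum f = ∑ y, (‖f (Fin.cons true y) - f (Fin.cons false yᶜ)‖ ^ 2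
      + ‖f (Fin.cons false y) - f (Fin.cons true yᶜ)‖ ^ 2) := by
  rw [diagSum, sum_succ, sum_add_distrib]
  simp only [Fin.compl_cons, Bool.compl_eq_bnot, Bool.not_true, Bool.not_false]

theorem edgeSum_succ (f : (Fin (n + 1) → Bool) → H) :
    edgeSum f = edgeSum (fun y => f (Fin.cons true y)) + edgeSum (fun y => f (Fin.cons false y))
      + 2 * ∑ y, ‖f (Fin.cons false y) - f (Fin.cons true y)‖ ^ 2 := by
  have flip_cons (b : Bool) (y : Fin n → Bool) (i : Fin (n + 1)) :
      ‖f (Fin.cons b y) - f (Function.update (Fin.cons b y : Fin (n + 1) → Bool) i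
        (!(Fin.cons b y : Fin (n + 1) → Bool) i))‖ ^ 2 =
      Fin.cases (‖f (Fin.cons b y) - f (Fin.cons (!b) y)‖ ^ 2)
        (fun j => ‖f (Fin.cons b y) - f (Fin.cons b (Function.update y j (!y j)))‖ ^ 2) i := by
    refine Fin.cases ?_ (fun j => ?_) i
    · simp only [Fin.cons_zero, Fin.update_cons_zero, Fin.cases_zero]
    · simp only [Fin.cons_succ, ← Fin.cons_update, Fin.cases_succ]
  simp only [edgeSum, sum_succ, flip_cons, Fin.sum_univ_succ, Fin.cases_zero, Fin.cases_succ,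
    sum_add_distrib, Bool.not_true, Bool.not_false,
    norm_sub_rev (f (Fin.cons true _)) (f (Fin.cons false _))]
  ring

variable [InnerProductSpace ℝ H]

theorem diagSum_le_edgeSum : ∀ {n : ℕ} (f : (Fin n → Bool) → H), diagSum f ≤ edgeSum f
  | 0, f => by
    have compl_eq (x : Fin 0 → Bool) : xᶜ = x := Subsingleton.elim _ _
    simp [diagSum, edgeSum, compl_eq]
  | n + 1, f => by
    set f₀ : (Fin n → Bool) → H := fun y => f (Fin.cons false y)
    set f₁ : (Fin n → Bool) → H := fun y => f (Fin.cons true y)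
    have square (y : Fin n → Bool) :
        ‖f₁ y - f₀ yᶜ‖ ^ 2 + ‖f₀ y - f₁ yᶜ‖ ^ 2 ≤ ‖f₀ y - f₀ yᶜ‖ ^ 2 + ‖f₁ y - f₁ yᶜ‖ ^ 2
          + ‖f₀ yᶜ - f₁ yᶜ‖ ^ 2 + ‖f₀ y - f₁ y‖ ^ 2 := by
      have := norm_sub_sq_add_norm_sub_sq_le (f₀ y) (f₀ yᶜ) (f₁ yᶜ) (f₁ y)
      rw [norm_sub_rev (f₀ yᶜ), norm_sub_rev (f₁ yᶜ), norm_sub_rev (f₁ y) (f₀ y)] at this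
      linarith
    have compl_reindex : ∑ y, ‖f₀ yᶜ - f₁ yᶜ‖ ^ 2 = ∑ y, ‖f₀ y - f₁ y‖ ^ 2 :=
      Equiv.sum_comp compl_involutive.toPerm fun y => ‖f₀ y - f₁ y‖ ^ 2
    calc diagSum f
        = ∑ y, (‖f₁ y - f₀ yᶜ‖ ^ 2 + ‖f₀ y - f₁ yᶜ‖ ^ 2) := diagSum_succ f
      _ ≤ ∑ y, (‖f₀ y - f₀ yᶜ‖ ^ 2 + ‖f₁ y - f₁ yᶜ‖ ^ 2
          + ‖f₀ yᶜ - f₁ yᶜ‖ ^ 2 + ‖f₀ y - f₁ y‖ ^ 2) := sum_le_sum fun y _ => square y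
      _ = diagSum f₁ + diagSum f₀ + 2 * ∑ y, ‖f₀ y - f₁ y‖ ^ 2 := by
        simp only [sum_add_distrib, compl_reindex, diagSum]
        ring
      _ ≤ edgeSum f₁ + edgeSum f₀ + 2 * ∑ y, ‖f₀ y - f₁ y‖ ^ 2 := by
        gcongr <;> exact diagSum_le_edgeSum _
      _ = edgeSum f := (edgeSum_succ f).symm

theorem sq_le_mul_sq {f : (Fin n → Bool) → H} {a b : ℝ} (hb : 0 ≤ b)
    (hdiag : ∀ x, b ≤ ‖f x - f xᶜ‖)
    (hedge : ∀ x i, ‖f x - f (Function.update x i (!x i))‖ ≤ a) :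
    b ^ 2 ≤ n * a ^ 2 := by
  have hdiag_sum : (2 ^ n : ℕ) • b ^ 2 ≤ diagSum f := by
    simpa [diagSum] using card_nsmul_le_sum univ _ _ fun x _ => pow_le_pow_left₀ hb (hdiag x) 2
  have hedge_sum : edgeSum f ≤ (2 ^ n : ℕ) • (n * a ^ 2) := by
    refine (sum_le_card_nsmul univ _ (n * a ^ 2) fun x _ => ?_).trans_eq (by simp)
    simpa using sum_le_card_nsmul univ _ _ fun i _ =>
      pow_le_pow_left₀ (norm_nonneg _) (hedge x i) 2
  have := hdiag_sum.trans ((diagSum_le_edgeSum f).trans hedge_sum)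
  rw [nsmul_eq_mul, nsmul_eq_mul] at this
  exact le_of_mul_le_mul_left this (by positivity)

end Enflo

noncomputable def toLp (p : ℝ≥0∞) (t : ℝ) (x : Fin n → Bool) : lp (fun _ : ℕ => ℝ) p :=
  ∑ i : Fin n, lp.single p (i : ℕ) (if x i then t else 0)

theorem norm_toLp_sub {p : ℝ≥0∞} (hp : 0 < p.toReal) (t : ℝ) (x y : Fin n → Bool) :
    ‖toLp p t x - toLp p t y‖ = |t| * (hammingDist x y : ℝ) ^ p.toReal⁻¹ := by
  have coord (i : Fin n) : ‖(if x i then t else 0) - (if y i then t else 0)‖ ^ p.toReal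
      = if x i ≠ y i then |t| ^ p.toReal else 0 := by
    cases x i <;> cases y i <;> simp [Real.zero_rpow hp.ne']
  have hpow : ‖toLp p t x - toLp p t y‖ ^ p.toReal
      = (|t| * (hammingDist x y : ℝ) ^ p.toReal⁻¹) ^ p.toReal := by
    rw [toLp, toLp, ← sum_sub_distrib]
    simp only [← lp.single_sub]
    rw [lp.norm_sum_single_fin hp, Real.mul_rpow (abs_nonneg t) (by positivity),
      ← Real.rpow_mul (Nat.cast_nonneg _), inv_mul_cancel₀ hp.ne', Real.rpow_one]
    simp only [coord, sum_ite, sum_const_zero, add_zero, sum_const, nsmul_eq_mul, hammingDist]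
    ring
  exact Real.rpow_left_injOn hp.ne' (lp.norm_nonneg' _)
    (show 0 ≤ |t| * (hammingDist x y : ℝ) ^ p.toReal⁻¹ by positivity) hpow

theorem sq_le_of_map_lp {p : ℝ≥0∞} (hp : 0 < p.toReal) {H : Type*} [SeminormedAddCommGroup H]
    [InnerProductSpace ℝ H] {T : lp (fun _ : ℕ => ℝ) p → H} {α A B C t : ℝ}
    (hT_up : ∀ x y, ‖T x - T y‖ ≤ A * ‖x - y‖ + B) (hC : 0 ≤ C) (ht : 0 ≤ t)
    (hT_low : ∀ x y, t ≤ ‖x - y‖ → C * ‖x - y‖ ^ α ≤ ‖T x - T y‖) (hn : 1 ≤ n) :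
    (C * (t * (n : ℝ) ^ p.toReal⁻¹) ^ α) ^ 2 ≤ n * (A * t + B) ^ 2 := by
  have hdist (x y : Fin n → Bool) :
      ‖toLp p t x - toLp p t y‖ = t * (hammingDist x y : ℝ) ^ p.toReal⁻¹ := by
    rw [norm_toLp_sub hp, abs_of_nonneg ht]
  have hdiag (x : Fin n → Bool) :
      C * (t * (n : ℝ) ^ p.toReal⁻¹) ^ α ≤ ‖T (toLp p t x) - T (toLp p t xᶜ)‖ := by
    have t_le : t ≤ t * (n : ℝ) ^ p.toReal⁻¹ :=
      le_mul_of_one_le_right ht (Real.one_le_rpow (by exact_mod_cast hn) (by positivity))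
    simpa only [hdist, hammingDist_compl, Fintype.card_fin] using
      hT_low (toLp p t x) (toLp p t xᶜ) (by rwa [hdist, hammingDist_compl, Fintype.card_fin])
  have hedge (x : Fin n → Bool) (i : Fin n) :
      ‖T (toLp p t x) - T (toLp p t (Function.update x i (!x i)))‖ ≤ A * t + B := by
    simpa [hdist, hammingDist_update_of_ne] using
      hT_up (toLp p t x) (toLp p t (Function.update x i (!x i)))
  exact sq_le_mul_sq (by positivity) hdiag hedge

end BoolCube

theorem lp_compression_upper_bound_general
    (p : ℝ) (hp1 : 1 ≤ p)
    (H : Type) [NormedAddCommGroup H] [InnerProductSpace ℝ H]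
    (α : ℝ)
    (T : lp (fun _ : ℕ => ℝ) (ENNReal.ofReal p) → H)
    (A B : ℝ)
    (hT_up : ∀ x y : lp (fun _ : ℕ => ℝ) (ENNReal.ofReal p),
      ‖T x - T y‖ ≤ A * ‖x - y‖ + B)
    (C t : ℝ) (hC : 0 < C) (ht : 0 < t)
    (hT_low : ∀ x y : lp (fun _ : ℕ => ℝ) (ENNReal.ofReal p),
      t ≤ ‖x - y‖ → C * ‖x - y‖ ^ α ≤ ‖T x - T y‖) :
    α ≤ p / 2 := by
  have hp : 0 < p := by linarith
  have hp_toReal : (ENNReal.ofReal p).toReal = p := ENNReal.toReal_ofReal hp.le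
  have growth (n : ℕ) (hn : 1 ≤ n) :
      (C * t ^ α) ^ 2 * (n : ℝ) ^ (p⁻¹ * α * 2) ≤ (A * t + B) ^ 2 * (n : ℝ) ^ (1 : ℝ) := by
    have hsq := BoolCube.sq_le_of_map_lp (by rwa [hp_toReal]) hT_up hC.le ht.le hT_low hn
    rw [hp_toReal, Real.mul_rpow ht.le (by positivity), ← Real.rpow_mul (Nat.cast_nonneg n),
      ← mul_assoc, mul_pow] at hsq
    rw [Real.rpow_mul (Nat.cast_nonneg n) _ 2, Real.rpow_two, Real.rpow_one]
    linarith
  have hexp := le_of_forall_mul_rpow_le_mul_rpow (by positivity) growth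
  rw [mul_assoc, inv_mul_le_iff₀ hp] at hexp
  linarith

/-- For `1 ≤ p ≤ 2`, a real Hilbert space `H`, and `α > 0`: if
`T : ℓ_p → H` is large-scale Lipschitz (`‖T x - T y‖ ≤ A·‖x-y‖_p + B`) and satisfies
`‖T x - T y‖ ≥ C·‖x-y‖_p^α` whenever `‖x-y‖_p ≥ t` (for some `C, t > 0`), then
`α ≤ p/2`. In particular the Hilbert space compression exponent of `ℓ_p` is at
most `p/2`. -/
theorem lp_compression_upper_bound
    (p : ℝ) (hp1 : 1 ≤ p) (hp2 : p ≤ 2)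
    (H : Type) [NormedAddCommGroup H] [InnerProductSpace ℝ H] [CompleteSpace H]
    (α : ℝ) (hα : 0 < α)
    (T : lp (fun _ : ℕ => ℝ) (ENNReal.ofReal p) → H)
    (A B : ℝ) (hA : 0 < A) (hB : 0 ≤ B)
    (hT_up : ∀ x y : lp (fun _ : ℕ => ℝ) (ENNReal.ofReal p),
      ‖T x - T y‖ ≤ A * ‖x - y‖ + B)
    (C t : ℝ) (hC : 0 < C) (ht : 0 < t)
    (hT_low : ∀ x y : lp (fun _ : ℕ => ℝ) (ENNReal.ofReal p),
      t ≤ ‖x - y‖ → C * ‖x - y‖ ^ α ≤ ‖T x - T y‖) :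
    α ≤ p / 2 :=
  lp_compression_upper_bound_general p hp1 H α T A B hT_up C t hC ht hT_low
end

section
/- Let 1 ≤ p < 2 and n ≥ 1, and equip the Hamming cube H_n = {0,1}^n with the ℓ_p metric d_p(x,y) = (#{i : x_i ≠ y_i})^{1/p}. Then: (i) for every real Hilbert space H, every injective map f : H_n → H, and all constants A, B > 0 with A·d_p(x,y) ≤ ‖f(x) − f(y)‖_H ≤ B·d_p(x,y) for all x, y ∈ H_n, one has B/A ≥ n^{1/p − 1/2}; and (ii) there exists a map f : H_n → ℝ^n (with the Euclidean norm) and constants A, B > 0 with B/A = n^{1/p − 1/2} such that A·d_p(x,y) ≤ ‖f(x) − f(y)‖ ≤ B·d_p(x,y) for all x, y ∈ H_n. Hence the Euclidean distortion of (H_n, d_p) equals diam(H_n, d_p)^{1 − p/2} = n^{1/p − 1/2}. -/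
/-!
Lower bound (Enflo). In a real inner product space the diagonals of any quadrilateral satisfy
`‖a - c‖² + ‖b - d‖² ≤ ‖a - b‖² + ‖b - c‖² + ‖c - d‖² + ‖d - a‖²`, the defect being
`‖a - b + c - d‖²`. Averaging over translates in a finite abelian group `G`, the energy
`E(s) = ∑ₓ ‖f (x + s) - f x‖²` satisfies `E(a + t) + E(a - t) ≤ 2 E(a) + 2 E(t)`. The cube
`ι → Bool` is a group of exponent two (addition on `Bool` is `xor`), so there `E` is subadditive
and the antipodal energy `E(1)` is at most the sum of the `n` edge energies `E(Pi.single i 1)`.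
Antipodal pairs are at distance `n^(1/p)` and edges at distance `1`, whence `A² n^(2/p) ≤ n B²`.

Upper bound. The inclusion of `{0,1}ⁿ` into `ℓ₂ⁿ` satisfies `‖x - y‖ = d^(1/2)` for the Hamming
distance `d`, and `n^(1/2 - 1/p) d^(1/p) ≤ d^(1/2) ≤ d^(1/p)` for every integer `0 ≤ d ≤ n`.
-/

open Finset

theorem dist_sq_add_dist_sq_le {H : Type*} [NormedAddCommGroup H] [InnerProductSpace ℝ H]
    (a b c d : H) :
    dist a c ^ 2 + dist b d ^ 2 ≤ dist a b ^ 2 + dist b c ^ 2 + dist c d ^ 2 + dist d a ^ 2 := by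
  have h := real_inner_self_nonneg (x := a - b + c - d)
  simp only [dist_eq_norm, ← real_inner_self_eq_norm_sq, inner_sub_left, inner_sub_right,
    inner_add_left, inner_add_right] at h ⊢
  linarith [real_inner_comm a b, real_inner_comm a c, real_inner_comm a d, real_inner_comm b c,
    real_inner_comm b d, real_inner_comm c d]

section DiffEnergy

variable {G : Type*} [AddCommGroup G] [Fintype G]

def diffEnergy {X : Type*} [PseudoMetricSpace X] (f : G → X) (s : G) : ℝ :=
  ∑ x, dist (f (x + s)) (f x) ^ 2

theorem diffEnergy_eq_sum_add_right {X : Type*} [PseudoMetricSpace X] (f : G → X) (s c : G) :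
    diffEnergy f s = ∑ x, dist (f (x + c + s)) (f (x + c)) ^ 2 :=
  (Equiv.sum_comp (Equiv.addRight c) fun y => dist (f (y + s)) (f y) ^ 2).symm

variable {H : Type*} [NormedAddCommGroup H] [InnerProductSpace ℝ H] (f : G → H)

theorem diffEnergy_add_add_diffEnergy_sub_le (a t : G) :
    diffEnergy f (a + t) + diffEnergy f (a - t) ≤ 2 * diffEnergy f a + 2 * diffEnergy f t := by
  -- quadrilateral `f (x + a + t), f (x + a), f x, f (x + t)`: diagonals along `a + t`, `a - t`
  have hquad : ∀ x, dist (f (x + (a + t))) (f x) ^ 2 + dist (f (x + t + (a - t))) (f (x + t)) ^ 2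
      ≤ dist (f (x + a + t)) (f (x + a)) ^ 2 + dist (f (x + a)) (f x) ^ 2
        + dist (f (x + t)) (f x) ^ 2 + dist (f (x + t + a)) (f (x + t)) ^ 2 := by
    intro x
    have h := dist_sq_add_dist_sq_le (f (x + a + t)) (f (x + a)) (f x) (f (x + t))
    rw [dist_comm (f x), dist_comm (f (x + t)) (f (x + a + t))] at h
    rwa [← add_assoc, add_add_sub_cancel, add_right_comm x t a]
  have hsum := sum_le_sum fun x (_ : x ∈ univ) => hquad x
  simp only [sum_add_distrib] at hsum
  rw [← diffEnergy_eq_sum_add_right f (a - t) t, ← diffEnergy_eq_sum_add_right f t a,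
    ← diffEnergy_eq_sum_add_right f a t] at hsum
  unfold diffEnergy at hsum ⊢
  linarith

theorem diffEnergy_add_le (a : G) {t : G} (ht : -t = t) :
    diffEnergy f (a + t) ≤ diffEnergy f a + diffEnergy f t := by
  have h := diffEnergy_add_add_diffEnergy_sub_le f a t
  rw [sub_eq_add_neg, ht] at h
  linarith

theorem diffEnergy_sum_le {ι : Type*} (s : ι → G) (hs : ∀ i, -s i = s i) (S : Finset ι) :
    diffEnergy f (∑ i ∈ S, s i) ≤ ∑ i ∈ S, diffEnergy f (s i) := by
  classical
  induction S using Finset.induction_on with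
  | empty => simp [diffEnergy]
  | insert j S hj ih =>
    rw [sum_insert hj, sum_insert hj, add_comm (s j), add_comm (diffEnergy f (s j))]
    exact (diffEnergy_add_le f _ (hs j)).trans (by gcongr)

theorem sq_le_card_mul_sq_of_dist_le {ι : Type*} [Fintype ι] (s : ι → G) (hs : ∀ i, -s i = s i)
    {α β : ℝ} (hα : 0 ≤ α) (hlow : ∀ x, α ≤ dist (f (x + ∑ i, s i)) (f x))
    (hup : ∀ x i, dist (f (x + s i)) (f x) ≤ β) :
    α ^ 2 ≤ Fintype.card ι * β ^ 2 := by
  have hG : (0 : ℝ) < Fintype.card G := by exact_mod_cast Fintype.card_pos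
  have hsum : Fintype.card G * α ^ 2 ≤ Fintype.card G * (Fintype.card ι * β ^ 2) :=
    calc Fintype.card G * α ^ 2 = ∑ _x : G, α ^ 2 := by simp
      _ ≤ diffEnergy f (∑ i, s i) := sum_le_sum fun x _ => pow_le_pow_left₀ hα (hlow x) 2
      _ ≤ ∑ i, diffEnergy f (s i) := diffEnergy_sum_le f s hs univ
      _ ≤ ∑ _i : ι, ∑ _x : G, β ^ 2 := sum_le_sum fun i _ => sum_le_sum fun x _ =>
            pow_le_pow_left₀ dist_nonneg (hup x i) 2
      _ = Fintype.card G * (Fintype.card ι * β ^ 2) := by simp; ring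
  exact le_of_mul_le_mul_left hsum hG

end DiffEnergy

theorem sqrt_natCast_le_rpow (k : ℕ) {q : ℝ} (hq : 1 / 2 ≤ q) : √(k : ℝ) ≤ (k : ℝ) ^ q := by
  rcases Nat.eq_zero_or_pos k with rfl | hk
  · simp [Real.zero_rpow (by linarith : q ≠ 0)]
  rw [Real.sqrt_eq_rpow]
  exact Real.rpow_le_rpow_of_exponent_le (by exact_mod_cast hk) hq

theorem natCast_rpow_mul_rpow_le_sqrt {k n : ℕ} (hkn : k ≤ n) {q : ℝ} (hq : 1 / 2 ≤ q) :
    (n : ℝ) ^ (1 / 2 - q) * (k : ℝ) ^ q ≤ √(k : ℝ) := by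
  rcases Nat.eq_zero_or_pos k with rfl | hk
  · simp [Real.zero_rpow (by linarith : q ≠ 0)]
  have hk' : (0 : ℝ) < k := by exact_mod_cast hk
  calc (n : ℝ) ^ (1 / 2 - q) * (k : ℝ) ^ q ≤ (k : ℝ) ^ (1 / 2 - q) * (k : ℝ) ^ q := by
        gcongr ?_ * _
        exact Real.rpow_le_rpow_of_nonpos hk' (by exact_mod_cast hkn) (by linarith)
    _ = √(k : ℝ) := by rw [← Real.rpow_add hk', sub_add_cancel, Real.sqrt_eq_rpow]

noncomputable def cubeToEuclidean {ι : Type*} (x : ι → Bool) : EuclideanSpace ℝ ι :=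
  WithLp.toLp 2 fun i => if x i then 1 else 0

section HammingCube

variable {ι : Type*} [Fintype ι]

theorem hammingDist_self_add_left {β : ι → Type*} [∀ i, AddGroup (β i)]
    [∀ i, DecidableEq (β i)] (x s : ∀ i, β i) : hammingDist (x + s) x = hammingNorm s := by
  simp only [hammingDist, hammingNorm, Pi.add_apply, ne_eq, add_eq_left]

theorem hammingNorm_single [DecidableEq ι] {β : ι → Type*} [∀ i, Zero (β i)]
    [∀ i, DecidableEq (β i)] (i : ι) {b : β i} (hb : b ≠ 0) : hammingNorm (Pi.single i b) = 1 := by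
  rw [hammingNorm, card_eq_one]
  exact ⟨i, by ext j; by_cases h : j = i <;> simp [h, hb]⟩

theorem hammingNorm_one {β : ι → Type*} [∀ i, MulZeroOneClass (β i)] [∀ i, Nontrivial (β i)]
    [∀ i, DecidableEq (β i)] : hammingNorm (1 : ∀ i, β i) = Fintype.card ι := by
  simp [hammingNorm]

theorem card_rpow_le_div_of_bilipschitz {H : Type*} [Nonempty ι]
    [NormedAddCommGroup H] [InnerProductSpace ℝ H] (p : ℝ) (f : (ι → Bool) → H) {A B : ℝ}
    (hA : 0 < A) (hf : ∀ x y, A * (hammingDist x y : ℝ) ^ (1 / p) ≤ ‖f x - f y‖ ∧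
      ‖f x - f y‖ ≤ B * (hammingDist x y : ℝ) ^ (1 / p)) :
    (Fintype.card ι : ℝ) ^ (1 / p - 1 / 2) ≤ B / A := by
  classical
  have hn : (0 : ℝ) < Fintype.card ι := by positivity
  have hlow : ∀ x, A * (Fintype.card ι : ℝ) ^ (1 / p) ≤ dist (f (x + 1)) (f x) := fun x => by
    simpa [hammingDist_self_add_left, hammingNorm_one, dist_eq_norm] using (hf (x + 1) x).1
  have hup : ∀ x i, dist (f (x + Pi.single i 1)) (f x) ≤ B := fun x i => by
    have h := (hf (x + Pi.single i 1) x).2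
    rwa [hammingDist_self_add_left, hammingNorm_single i one_ne_zero, Nat.cast_one,
      Real.one_rpow, mul_one, ← dist_eq_norm] at h
  have hB : 0 ≤ B := dist_nonneg.trans (hup 1 (Classical.arbitrary ι))
  have key := sq_le_card_mul_sq_of_dist_le (α := A * (Fintype.card ι : ℝ) ^ (1 / p)) f
    (fun i => Pi.single i 1) (fun _ => rfl) (by positivity)
    (by rw [univ_sum_single fun _ => 1]; exact hlow) hup
  rw [Real.rpow_sub hn, Real.rpow_div_two_eq_sqrt _ hn.le, Real.rpow_one,
    div_le_div_iff₀ (by positivity) hA]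
  refine (pow_le_pow_iff_left₀ (by positivity) (by positivity) two_ne_zero).mp ?_
  rw [mul_pow, mul_pow, Real.sq_sqrt hn.le]
  linarith

theorem norm_cubeToEuclidean_sub (x y : ι → Bool) :
    ‖cubeToEuclidean x - cubeToEuclidean y‖ = √(hammingDist x y : ℝ) := by
  rw [EuclideanSpace.norm_eq, hammingDist, ← sum_boole]
  congr 1
  refine sum_congr rfl fun i _ => ?_
  cases hx : x i <;> cases hy : y i <;> simp [cubeToEuclidean, hx, hy]

end HammingCube

/-- For `1 ≤ p < 2` and `n ≥ 1`, the Hamming cube `H_n = {0,1}^n` with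
the `ℓ_p` metric `d_p(x,y) = (#{i : x_i ≠ y_i})^(1/p)` has Euclidean distortion exactly
`n^(1/p - 1/2)`:
(i) every injective bi-Lipschitz map `f : H_n → H` into a real Hilbert space, with
constants `A, B > 0` satisfying `A·d_p(x,y) ≤ ‖f x - f y‖ ≤ B·d_p(x,y)`, has
`B/A ≥ n^(1/p - 1/2)`;
(ii) there is a map `f : H_n → ℝⁿ` (Euclidean norm) and constants `A, B > 0` with
`B/A = n^(1/p - 1/2)` satisfying the same two-sided inequality.
The cube is modelled as `Fin n → Bool`. -/
theorem hamming_cube_lp_metric_distortion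
    (p : ℝ) (hp1 : 1 ≤ p) (hp2 : p < 2) (n : ℕ) (hn : 1 ≤ n) :
    (∀ (H : Type) [NormedAddCommGroup H] [InnerProductSpace ℝ H] [CompleteSpace H],
      ∀ f : (Fin n → Bool) → H, Function.Injective f →
      ∀ A B : ℝ, 0 < A → 0 < B →
      (∀ x y : Fin n → Bool,
        A * ((Finset.univ.filter fun i => x i ≠ y i).card : ℝ) ^ (1 / p) ≤ ‖f x - f y‖ ∧
        ‖f x - f y‖ ≤ B * ((Finset.univ.filter fun i => x i ≠ y i).card : ℝ) ^ (1 / p)) →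
      (n : ℝ) ^ (1 / p - 1 / 2) ≤ B / A) ∧
    (∃ (f : (Fin n → Bool) → EuclideanSpace ℝ (Fin n)) (A B : ℝ),
      0 < A ∧ 0 < B ∧ B / A = (n : ℝ) ^ (1 / p - 1 / 2) ∧
      ∀ x y : Fin n → Bool,
        A * ((Finset.univ.filter fun i => x i ≠ y i).card : ℝ) ^ (1 / p) ≤ ‖f x - f y‖ ∧
        ‖f x - f y‖ ≤ B * ((Finset.univ.filter fun i => x i ≠ y i).card : ℝ) ^ (1 / p)) := by
  have hq : 1 / 2 ≤ 1 / p := one_div_le_one_div_of_le (by linarith) hp2.le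
  have hn' : (0 : ℝ) < n := by exact_mod_cast hn
  refine ⟨fun H _ _ _ f _ A B hA _ hf => ?_, ?_⟩
  · have : Nonempty (Fin n) := Fin.pos_iff_nonempty.mp hn
    simpa only [Fintype.card_fin] using card_rpow_le_div_of_bilipschitz p f hA hf
  · refine ⟨cubeToEuclidean, (n : ℝ) ^ (1 / 2 - 1 / p), 1, by positivity, one_pos, ?_,
      fun x y => ?_⟩
    · rw [one_div ((n : ℝ) ^ _), ← Real.rpow_neg hn'.le, neg_sub]
    · rw [norm_cubeToEuclidean_sub, one_mul]
      have hxy : hammingDist x y ≤ n := hammingDist_le_card_fintype.trans_eq (Fintype.card_fin n)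
      exact ⟨natCast_rpow_mul_rpow_le_sqrt hxy hq, sqrt_natCast_le_rpow _ hq⟩
end

section
/- Let 1 ≤ p ≤ 2. Then ℓ_p coarsely embeds into a Hilbert space: there exist a real Hilbert space H, a map T : ℓ_p → H, and nondecreasing functions ρ₁, ρ₂ : [0,∞) → [0,∞) with ρ₁(t) → ∞ as t → ∞, such that ρ₁(‖x − y‖_p) ≤ ‖T(x) − T(y)‖_H ≤ ρ₂(‖x − y‖_p) for all x, y ∈ ℓ_p. -/
/-!
Since `∫₀^∞ sin² (c u) u^(-1-p) du = |c|^p ∫₀^∞ sin² u u^(-1-p) du` with a finite positive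
integral for `0 < p < 2`, the map sending `s : ℝ` to `u ↦ u^(-(1+p)/2) (exp (2 i s u) - 1)` in
`L²(0, ∞)` satisfies `‖φ s - φ t‖² = C |s - t|^p`; for `p = 2` the identity of `ℝ` does this.
Applied coordinatewise it sends `ℓ_p` into `ℓ²(L²)` with `‖T x - T y‖ = √C ‖x - y‖_p^(p/2)`,
so `ρ₁ = ρ₂ = t ↦ √C t^(p/2)` witness a coarse embedding.
-/

open MeasureTheory Real Set

section LevyKernel

variable {p : ℝ}

lemma integrableOn_sin_mul_sq_mul_rpow (hp0 : 0 < p) (hp2 : p < 2) (c : ℝ) :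
    IntegrableOn (fun u => sin (c * u) ^ 2 * u ^ (-1 - p)) (Ioi 0) := by
  have hmeas : AEStronglyMeasurable (fun u => sin (c * u) ^ 2 * u ^ (-1 - p)) := by
    measurability
  have near_zero : IntegrableOn (fun u => sin (c * u) ^ 2 * u ^ (-1 - p)) (Ioc 0 1) := by
    have hdom : IntegrableOn (fun u => c ^ 2 * u ^ (1 - p)) (Ioc 0 1) := by
      refine Integrable.const_mul ?_ _
      have := intervalIntegral.intervalIntegrable_rpow' (a := 0) (b := 1) (r := 1 - p)
        (by linarith)
      rwa [intervalIntegrable_iff, uIoc_of_le zero_le_one] at this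
    refine Integrable.mono hdom hmeas.restrict ?_
    filter_upwards [ae_restrict_mem measurableSet_Ioc] with u hu
    have hu0 : 0 < u := hu.1
    rw [norm_of_nonneg (by positivity), norm_of_nonneg (by positivity)]
    calc sin (c * u) ^ 2 * u ^ (-1 - p) ≤ (c * u) ^ 2 * u ^ (-1 - p) := 
          mul_le_mul_of_nonneg_right sin_sq_le_sq (by positivity)
      _ = c ^ 2 * u ^ (1 - p) := by
          rw [mul_pow, mul_assoc, ← rpow_natCast u 2, ← rpow_add hu0]; congr 2; push_cast; ring
  have near_top : IntegrableOn (fun u => sin (c * u) ^ 2 * u ^ (-1 - p)) (Ioi 1) := by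
    refine Integrable.mono (integrableOn_Ioi_rpow_of_lt (a := -1 - p) (by linarith) zero_lt_one)
      hmeas.restrict ?_
    filter_upwards [ae_restrict_mem measurableSet_Ioi] with u hu
    have hu0 : 0 < u := zero_lt_one.trans hu
    rw [norm_of_nonneg (by positivity), norm_of_nonneg (by positivity)]
    exact mul_le_of_le_one_left (by positivity) (sin_sq_le_one _)
  rw [← Ioc_union_Ioi_eq_Ioi zero_le_one]
  exact near_zero.union near_top

lemma integral_sin_mul_sq_mul_rpow (hp0 : 0 < p) (c : ℝ) :
    ∫ u in Ioi 0, sin (c * u) ^ 2 * u ^ (-1 - p)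
      = |c| ^ p * ∫ u in Ioi 0, sin u ^ 2 * u ^ (-1 - p) := by
  rcases eq_or_ne c 0 with rfl | hc
  · simp [zero_rpow hp0.ne']
  have hc' : 0 < |c| := abs_pos.mpr hc
  have rescale : ∀ u ∈ Ioi (0 : ℝ), sin (c * u) ^ 2 * u ^ (-1 - p)
      = |c| ^ (1 + p) * (sin (|c| * u) ^ 2 * (|c| * u) ^ (-1 - p)) := by
    intro u (hu : 0 < u)
    have hsin : sin (c * u) ^ 2 = sin (|c| * u) ^ 2 := by
      rcases abs_choice c with h | h <;> simp [h, neg_mul, sin_neg]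
    have hpow : |c| ^ (1 + p) * |c| ^ (-1 - p) = 1 := by rw [← rpow_add hc']; norm_num
    rw [mul_rpow hc'.le hu.le, hsin]
    linear_combination -(sin (|c| * u) ^ 2 * u ^ (-1 - p)) * hpow
  rw [setIntegral_congr_fun measurableSet_Ioi rescale, integral_const_mul,
    integral_comp_mul_left_Ioi (fun v => sin v ^ 2 * v ^ (-1 - p)) 0 hc', mul_zero, smul_eq_mul,
    ← mul_assoc, ← rpow_neg_one, ← rpow_add hc']
  norm_num

lemma integral_sin_sq_mul_rpow_pos (hp0 : 0 < p) (hp2 : p < 2) :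
    0 < ∫ u in Ioi 0, sin u ^ 2 * u ^ (-1 - p) := by
  have hint := integrableOn_sin_mul_sq_mul_rpow hp0 hp2 1
  simp only [one_mul] at hint
  have hnonneg : 0 ≤ᵐ[volume.restrict (Ioi 0)] fun u : ℝ => sin u ^ 2 * u ^ (-1 - p) := by
    filter_upwards [ae_restrict_mem measurableSet_Ioi] with u (hu : 0 < u)
    positivity
  rw [setIntegral_pos_iff_support_of_nonneg_ae hnonneg hint]
  have hsupp : Ioo 0 π ⊆ Function.support (fun u : ℝ => sin u ^ 2 * u ^ (-1 - p)) ∩ Ioi 0 := by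
    intro u ⟨hu0, huπ⟩
    have := sin_pos_of_pos_of_lt_pi hu0 huπ
    exact ⟨(by positivity : 0 < sin u ^ 2 * u ^ (-1 - p)).ne', hu0⟩
  calc (0 : ENNReal) < volume (Ioo 0 π) := by simp [pi_pos]
    _ ≤ _ := measure_mono hsupp

end LevyKernel

section LevyEmbedding

variable {p : ℝ}

noncomputable def levyFeature (p s u : ℝ) : ℂ :=
  (u ^ (-(1 + p) / 2) : ℝ) * (Complex.exp (Complex.I * ↑(2 * s * u)) - 1)

lemma norm_levyFeature_sub (p s t u : ℝ) :
    ‖levyFeature p s u - levyFeature p t u‖ = ‖levyFeature p (s - t) u‖ := by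
  have hrot : levyFeature p s u - levyFeature p t u
      = Complex.exp (Complex.I * ↑(2 * t * u)) * levyFeature p (s - t) u := by
    have hexp :
        Complex.exp (Complex.I * ↑(2 * t * u)) * Complex.exp (Complex.I * ↑(2 * (s - t) * u))
          = Complex.exp (Complex.I * ↑(2 * s * u)) := by
      rw [← Complex.exp_add]; push_cast; ring_nf
    simp only [levyFeature]
    linear_combination -(↑(u ^ (-(1 + p) / 2)) : ℂ) * hexp
  rw [hrot, norm_mul, mul_comm Complex.I, Complex.norm_exp_ofReal_mul_I, one_mul]

lemma norm_levyFeature_sq (p s : ℝ) {u : ℝ} (hu : 0 < u) :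
    ‖levyFeature p s u‖ ^ 2 = 4 * (sin (s * u) ^ 2 * u ^ (-1 - p)) := by
  rw [levyFeature, norm_mul, Complex.norm_exp_I_mul_ofReal_sub_one, Complex.norm_real,
    norm_of_nonneg (by positivity), mul_pow, Real.norm_eq_abs, sq_abs, ← rpow_natCast,
    ← rpow_mul hu.le]
  ring_nf

lemma continuousOn_levyFeature (p s : ℝ) : ContinuousOn (levyFeature p s) (Ioi 0) := by
  intro u hu
  have : ContinuousAt (fun u : ℝ => u ^ (-(1 + p) / 2)) u :=
    continuousAt_rpow_const u _ (Or.inl (ne_of_gt hu))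
  unfold levyFeature
  fun_prop

lemma memLp_levyFeature (hp0 : 0 < p) (hp2 : p < 2) (s : ℝ) :
    MemLp (levyFeature p s) 2 (volume.restrict (Ioi 0)) := by
  have hmeas := (continuousOn_levyFeature p s).aestronglyMeasurable (μ := volume) measurableSet_Ioi
  rw [memLp_two_iff_integrable_sq_norm hmeas]
  refine IntegrableOn.congr_fun ((integrableOn_sin_mul_sq_mul_rpow hp0 hp2 s).const_mul 4) ?_
    measurableSet_Ioi
  intro u hu
  exact (norm_levyFeature_sq p s hu).symm

noncomputable def levyEmbedding (hp0 : 0 < p) (hp2 : p < 2) (s : ℝ) :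
    Lp ℂ 2 (volume.restrict (Ioi (0 : ℝ))) :=
  (memLp_levyFeature hp0 hp2 s).toLp _

lemma norm_levyEmbedding_sub_sq (hp0 : 0 < p) (hp2 : p < 2) (s t : ℝ) :
    ‖levyEmbedding hp0 hp2 s - levyEmbedding hp0 hp2 t‖ ^ 2
      = 4 * (∫ u in Ioi 0, sin u ^ 2 * u ^ (-1 - p)) * |s - t| ^ p := by
  have hae : ⇑(levyEmbedding hp0 hp2 s - levyEmbedding hp0 hp2 t)
      =ᵐ[volume.restrict (Ioi 0)] fun u => levyFeature p s u - levyFeature p t u := by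
    rw [levyEmbedding, levyEmbedding, ← MemLp.toLp_sub]
    exact MemLp.coeFn_toLp _
  rw [← real_inner_self_eq_norm_sq, L2.inner_def,
    integral_congr_ae (g := fun u => ‖levyFeature p s u - levyFeature p t u‖ ^ 2)
      (hae.mono fun u hu => by rw [hu, real_inner_self_eq_norm_sq])]
  calc ∫ u in Ioi 0, ‖levyFeature p s u - levyFeature p t u‖ ^ 2
      = ∫ u in Ioi 0, 4 * (sin ((s - t) * u) ^ 2 * u ^ (-1 - p)) :=
        setIntegral_congr_fun measurableSet_Ioi fun u hu => by
          rw [norm_levyFeature_sub, norm_levyFeature_sq p _ hu]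
    _ = _ := by rw [integral_const_mul, integral_sin_mul_sq_mul_rpow hp0]; ring

end LevyEmbedding

theorem exists_sq_norm_sub_eq_mul_abs_sub_rpow {p : ℝ} (hp0 : 0 < p) (hp2 : p ≤ 2) :
    ∃ (E : Type) (_ : NormedAddCommGroup E) (_ : InnerProductSpace ℝ E) (_ : CompleteSpace E)
      (f : ℝ → E) (C : ℝ), 0 < C ∧ ∀ s t, ‖f s - f t‖ ^ 2 = C * |s - t| ^ p := by
  rcases hp2.lt_or_eq with hp2 | rfl
  · exact ⟨_, inferInstance, inferInstance, inferInstance, levyEmbedding hp0 hp2, _,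
      mul_pos four_pos (integral_sin_sq_mul_rpow_pos hp0 hp2), norm_levyEmbedding_sub_sq hp0 hp2⟩
  · exact ⟨ℝ, inferInstance, inferInstance, inferInstance, id, 1, one_pos,
      fun s t => by simp [Real.norm_eq_abs]⟩

section CoordinatewiseMap

open scoped ENNReal

variable {ι E : Type*} [NormedAddCommGroup E] {p : ℝ≥0∞} {C : ℝ} {f : ℝ → E}

lemma memℓp_two_comp_sub (hp : 0 < p.toReal)
    (hf : ∀ s t, ‖f s - f t‖ ^ 2 = C * |s - t| ^ p.toReal) (x : lp (fun _ : ι => ℝ) p) :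
    Memℓp (fun i => f (x i) - f 0) 2 := by
  refine memℓp_gen ?_
  have hx : Summable fun i => ‖x i‖ ^ p.toReal := (lp.memℓp x).summable hp
  refine (hx.mul_left C).congr fun i => ?_
  rw [ENNReal.toReal_ofNat, rpow_two, hf, sub_zero, Real.norm_eq_abs]

def lpCoordinatewise (hp : 0 < p.toReal)
    (hf : ∀ s t, ‖f s - f t‖ ^ 2 = C * |s - t| ^ p.toReal) :
    lp (fun _ : ι => ℝ) p → lp (fun _ : ι => E) 2 :=
  fun x => ⟨fun i => f (x i) - f 0, memℓp_two_comp_sub hp hf x⟩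

lemma norm_lpCoordinatewise_sub (hp : 0 < p.toReal)
    (hf : ∀ s t, ‖f s - f t‖ ^ 2 = C * |s - t| ^ p.toReal) (x y : lp (fun _ : ι => ℝ) p) :
    ‖lpCoordinatewise hp hf x - lpCoordinatewise hp hf y‖ = √C * ‖x - y‖ ^ (p.toReal / 2) := by
  set T := lpCoordinatewise (ι := ι) hp hf
  have hsq : ‖T x - T y‖ ^ 2 = C * ‖x - y‖ ^ p.toReal := by
    have hT := lp.norm_rpow_eq_tsum (p := 2) (by norm_num) (T x - T y)
    simp only [ENNReal.toReal_ofNat, rpow_two] at hT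
    rw [hT, lp.norm_rpow_eq_tsum hp, ← tsum_mul_left]
    refine tsum_congr fun i => ?_
    change ‖(f (x i) - f 0) - (f (y i) - f 0)‖ ^ 2 = C * ‖(x - y) i‖ ^ p.toReal
    rw [sub_sub_sub_cancel_right, hf, lp.coeFn_sub, Pi.sub_apply, Real.norm_eq_abs]
  rw [← sqrt_sq (norm_nonneg _), hsq, sqrt_mul' _ (rpow_nonneg (lp.norm_nonneg' _) _),
    sqrt_eq_rpow (‖x - y‖ ^ p.toReal), ← rpow_mul (lp.norm_nonneg' _)]
  ring_nf

end CoordinatewiseMap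

/-- For `1 ≤ p ≤ 2`, the space `ℓ_p` coarsely embeds into a Hilbert
space: there are a real Hilbert space `H`, a map `T : ℓ_p → H`, and nondecreasing
functions `ρ₁, ρ₂ : [0,∞) → [0,∞)` with `ρ₁(t) → ∞` as `t → ∞`, such that
`ρ₁(‖x-y‖_p) ≤ ‖T x - T y‖ ≤ ρ₂(‖x-y‖_p)` for all `x, y ∈ ℓ_p`. -/
theorem lp_coarsely_embeds_into_Hilbert
    (p : ℝ) (hp1 : 1 ≤ p) (hp2 : p ≤ 2) :
    ∃ (H : Type) (_ : NormedAddCommGroup H) (_ : InnerProductSpace ℝ H)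
      (_ : CompleteSpace H) (T : lp (fun _ : ℕ => ℝ) (ENNReal.ofReal p) → H)
      (ρ₁ ρ₂ : ℝ → ℝ),
      (∀ s ∈ Set.Ici (0 : ℝ), 0 ≤ ρ₁ s) ∧
      (∀ s ∈ Set.Ici (0 : ℝ), 0 ≤ ρ₂ s) ∧
      MonotoneOn ρ₁ (Set.Ici (0 : ℝ)) ∧
      MonotoneOn ρ₂ (Set.Ici (0 : ℝ)) ∧
      Filter.Tendsto ρ₁ Filter.atTop Filter.atTop ∧
      ∀ x y : lp (fun _ : ℕ => ℝ) (ENNReal.ofReal p),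
        ρ₁ ‖x - y‖ ≤ ‖T x - T y‖ ∧ ‖T x - T y‖ ≤ ρ₂ ‖x - y‖ := by
  have hp0 : 0 < p := by linarith
  have hpReal : (ENNReal.ofReal p).toReal = p := ENNReal.toReal_ofReal hp0.le
  obtain ⟨E, _, _, _, f, C, hC, hf⟩ := exists_sq_norm_sub_eq_mul_abs_sub_rpow hp0 hp2
  have hp : 0 < (ENNReal.ofReal p).toReal := by rwa [hpReal]
  have hf' : ∀ s t, ‖f s - f t‖ ^ 2 = C * |s - t| ^ (ENNReal.ofReal p).toReal := by rwa [hpReal]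
  have hρ : StrictMonoOn (fun t : ℝ => √C * t ^ (p / 2)) (Ici 0) := fun a ha b _ hab =>
    mul_lt_mul_of_pos_left (rpow_lt_rpow ha hab (by positivity)) (sqrt_pos.mpr hC)
  refine ⟨lp (fun _ : ℕ => E) 2, inferInstance, inferInstance, inferInstance,
    lpCoordinatewise hp hf', _, _, fun s (hs : 0 ≤ s) => by positivity,
    fun s (hs : 0 ≤ s) => by positivity, hρ.monotoneOn, hρ.monotoneOn,
    (tendsto_rpow_atTop (by positivity)).const_mul_atTop (sqrt_pos.mpr hC), fun x y => ?_⟩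
  rw [norm_lpCoordinatewise_sub, hpReal]
  exact ⟨le_rfl, le_rfl⟩
end
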